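/- arXiv:2407.08812 — 4 statements merged into one kernel-verified Lean document; each statement's English description precedes it below -/
import Mathlib

section
/- Let N be a binary tree-based network and let C = (a_1,...,a_k) be a crown, with c_{2j} the arc from head(a_{2j}) to its child for j in [k/2]. Then there are exactly 2 distinct ways to cover the arcs of C together with the arcs c_{2j} using reticulated cherry shapes, namely {c_{2j}, a_{2j+1}, a_{2j+2} : j ∈ [(k−2)/2]} ∪ {c_k, a_1, a_2} and {{c_{2j}, a_{2j}, a_{2j−1}} : j ∈ [k/2]}. -/
open Classical

structure MGraph (V A : Type) where
  tail : A → V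
  head : A → V

namespace MGraph

variable {V A : Type} [Fintype V] [Fintype A] [DecidableEq V] [DecidableEq A]

variable (D : MGraph V A)

def indeg (v : V) : ℕ := Fintype.card {a : A // D.head a = v}
def outdeg (v : V) : ℕ := Fintype.card {a : A // D.tail a = v}

def IsRoot (v : V) : Prop := D.indeg v = 0 ∧ D.outdeg v = 1
def IsLeaf (v : V) : Prop := D.indeg v = 1 ∧ D.outdeg v = 0
def IsTreeNode (v : V) : Prop := D.indeg v = 1 ∧ 2 ≤ D.outdeg v
def IsRetic (v : V) : Prop := 2 ≤ D.indeg v ∧ D.outdeg v = 1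

def Acyclic : Prop := ∃ rank : V → ℕ, ∀ a : A, rank (D.tail a) < rank (D.head a)
def NoParallel : Prop := ∀ a b : A, D.tail a = D.tail b → D.head a = D.head b → a = b
def IsRootArc (e : A) : Prop := D.IsRoot (D.tail e)

/-- (non-binary) phylogenetic network -/
def IsPhylo : Prop :=
  D.Acyclic ∧ D.NoParallel ∧ (∃! v : V, D.IsRoot v) ∧
    ∀ v : V, D.IsRoot v ∨ D.IsLeaf v ∨ D.IsTreeNode v ∨ D.IsRetic v

def IsSemiBinary : Prop := D.IsPhylo ∧ ∀ v : V, D.IsTreeNode v → D.outdeg v = 2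
def IsBinary : Prop := D.IsSemiBinary ∧ ∀ v : V, D.IsRetic v → D.indeg v = 2

/-- A support tree: keep all non-reticulation arcs, exactly one incoming arc per
reticulation, and create no new leaves. -/
def IsSupportTree (S : Set A) : Prop :=
  (∀ a : A, ¬ D.IsRetic (D.head a) → a ∈ S) ∧
  (∀ v : V, D.IsRetic v → ∃! a : A, a ∈ S ∧ D.head a = v) ∧
  (∀ v : V, ¬ D.IsLeaf v → ∃ a ∈ S, D.tail a = v)

def IsTreeBased : Prop := ∃ S : Set A, D.IsSupportTree S

def IsTreeChild : Prop :=
  ∀ v : V, ¬ D.IsLeaf v → ∃ e : A, D.tail e = v ∧ (D.IsTreeNode (D.head e) ∨ D.IsLeaf (D.head e))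

/-- A cherry shape: two arcs with common tail and distinct heads. -/
def IsCherryShape (s : Finset A) : Prop :=
  ∃ a b : A, a ≠ b ∧ s = {a, b} ∧ D.tail a = D.tail b ∧ D.head a ≠ D.head b

/-- A reticulated cherry shape with designated middle arc `mid`; node-type
predicates `tn` (tree node) and `rt` (reticulation) are parameters so that the
definition also applies to the bulged version of a network. -/
def IsRCShapeMid (tn rt : V → Prop) (s : Finset A) (mid : A) : Prop :=
  ∃ bot top : A, bot ≠ mid ∧ bot ≠ top ∧ mid ≠ top ∧ s = {bot, mid, top} ∧
    D.head mid = D.tail bot ∧ D.tail mid = D.tail top ∧ rt (D.tail bot) ∧ tn (D.tail mid)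

def IsRCShape (tn rt : V → Prop) (s : Finset A) : Prop := ∃ mid : A, D.IsRCShapeMid tn rt s mid

/-- A cherry cover: every arc except root arcs lies in exactly one shape. -/
def IsCherryCoverG (tn rt : V → Prop) (isRoot : A → Prop) (P : Finset (Finset A)) : Prop :=
  (∀ s ∈ P, D.IsCherryShape s ∨ D.IsRCShape tn rt s) ∧
  (∀ e : A, ¬ isRoot e → ∃! s : Finset A, s ∈ P ∧ e ∈ s) ∧
  (∀ s ∈ P, ∀ e ∈ s, ¬ isRoot e)

def IsCherryCover (P : Finset (Finset A)) : Prop :=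
  D.IsCherryCoverG D.IsTreeNode D.IsRetic D.IsRootArc P

/-- `Q` covers exactly the arc set `T` with cherry and reticulated cherry shapes. -/
def CoversExactly (tn rt : V → Prop) (T : Set A) (Q : Finset (Finset A)) : Prop :=
  (∀ s ∈ Q, D.IsCherryShape s ∨ D.IsRCShape tn rt s) ∧
  (∀ s ∈ Q, ∀ e ∈ s, e ∈ T) ∧ (∀ e ∈ T, ∃! s : Finset A, s ∈ Q ∧ e ∈ s)

/-- `Q` covers exactly the arc set `T` using only reticulated cherry shapes. -/
def CoversExactlyRC (tn rt : V → Prop) (T : Set A) (Q : Finset (Finset A)) : Prop :=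
  (∀ s ∈ Q, D.IsRCShape tn rt s) ∧
  (∀ s ∈ Q, ∀ e ∈ s, e ∈ T) ∧ (∀ e ∈ T, ∃! s : Finset A, s ∈ Q ∧ e ∈ s)

/-- Multiplicity of an arc in the bulged version. -/
noncomputable def bulgeMult (a : A) : ℕ :=
  if D.IsRetic (D.tail a) then D.indeg (D.tail a) - 1 else 1

/-- Arcs of the bulged version `B(N)`. -/
abbrev BArc : Type := Σ a : A, Fin (D.bulgeMult a)

def Bulged : MGraph V D.BArc := ⟨fun p => D.tail p.1, fun p => D.head p.1⟩

/-- A cherry cover of the bulged version, with node types taken from `N`. -/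
def IsBulgedCherryCover (P : Finset (Finset D.BArc)) : Prop :=
  D.Bulged.IsCherryCoverG (fun v => D.IsTreeNode v) (fun v => D.IsRetic v)
    (fun e => D.IsRootArc e.1) P

/-- Isomorphism class of a bulged cherry cover: forget which parallel copy is used. -/
noncomputable def coverClass (P : Finset (Finset D.BArc)) : Multiset (Finset A) :=
  P.val.map (fun s => s.image (fun e => e.1))

/-- Zig-zag trail: a nonempty sequence of distinct arcs alternately sharing heads
and tails. -/
def IsZZ (l : List A) : Prop :=
  l ≠ [] ∧ l.Nodup ∧
    (((∀ (i : ℕ) (x y : A), l[2*i]? = some x → l[2*i+1]? = some y → D.head x = D.head y) ∧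
      (∀ (i : ℕ) (x y : A), l[2*i+1]? = some x → l[2*i+2]? = some y → D.tail x = D.tail y)) ∨
     ((∀ (i : ℕ) (x y : A), l[2*i]? = some x → l[2*i+1]? = some y → D.tail x = D.tail y) ∧
      (∀ (i : ℕ) (x y : A), l[2*i+1]? = some x → l[2*i+2]? = some y → D.head x = D.head y)))

/-- Maximal zig-zag trail: not properly contained in another zig-zag trail. -/
def IsMaxZZ (l : List A) : Prop := D.IsZZ l ∧ ∀ l' : List A, D.IsZZ l' → l.Sublist l' → l' = l

/-- A fence decomposition, as a partition of the non-root arcs into arc sets of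
maximal zig-zag trails. -/
def IsFenceDecomp (P : Set (Set A)) : Prop :=
  (∀ s ∈ P, ∃ l : List A, D.IsMaxZZ l ∧ {e : A | e ∈ l} = s) ∧
  (∀ s ∈ P, ∀ t ∈ P, s ≠ t → Disjoint s t) ∧
  ⋃₀ P = {e : A | ¬ D.IsRootArc e}

/-- W-fence (binary definition). -/
def IsWFence (l : List A) : Prop :=
  D.IsMaxZZ l ∧ 2 ≤ l.length ∧ Even l.length ∧
  (∀ x, l.head? = some x → D.IsRetic (D.tail x)) ∧
  (∀ y, l.getLast? = some y → D.IsRetic (D.tail y))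

/-- A (not necessarily maximal) crown: a closed zig-zag trail of even length ≥ 4. -/
def IsCrownCycle (l : List A) : Prop :=
  D.IsZZ l ∧ 4 ≤ l.length ∧ Even l.length ∧
  ∀ x y, l.head? = some x → l.getLast? = some y → (D.head x = D.head y ∨ D.tail x = D.tail y)

def IsCrownTrail (l : List A) : Prop := D.IsMaxZZ l ∧ D.IsCrownCycle l

def ContainsCrown (l : List A) : Prop := ∃ m : List A, D.IsCrownCycle m ∧ m.IsInfix l

/-- M-fence: maximal zig-zag trail of even length, not a crown, all tails tree nodes. -/
def IsMFence (l : List A) : Prop :=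
  D.IsMaxZZ l ∧ Even l.length ∧ ¬ D.IsCrownTrail l ∧ ∀ e ∈ l, D.IsTreeNode (D.tail e)

/-- W-fence (crown-free version, for non-binary networks). -/
def IsWFenceNC (l : List A) : Prop :=
  D.IsMaxZZ l ∧ Even l.length ∧ ¬ D.ContainsCrown l ∧
  (∀ x, l.head? = some x → D.IsRetic (D.tail x)) ∧
  (∀ y, l.getLast? = some y → D.IsRetic (D.tail y))

/-- Lower W-crown. -/
def IsLowerWCrown (l : List A) : Prop :=
  D.IsZZ l ∧ ∃ p cr : List A, l = p ++ cr ∧ Odd p.length ∧ ¬ D.ContainsCrown p ∧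
    D.IsCrownCycle cr ∧
    (∀ x y, p.getLast? = some x → cr.head? = some y → D.head x = D.head y) ∧
    (∀ x, p.head? = some x → D.IsRetic (D.tail x))

/-- Double-crown: two crowns joined by a crown-free trail. -/
def IsDoubleCrown (l : List A) : Prop :=
  D.IsZZ l ∧ ∃ p q r : List A, l = p ++ q ++ r ∧ D.IsCrownCycle p ∧ D.IsCrownCycle r ∧
    ¬ D.ContainsCrown q

def ArcsOf (F : Set (List A)) : Set A := {e : A | ∃ l ∈ F, e ∈ l}

def Intersects (l1 l2 : List A) : Prop := ∃ e : A, e ∈ l1 ∧ e ∈ l2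

/-- Extended zig-zag trail: a set of maximal zig-zag trails chain-connected by
pairwise intersection. -/
def IsExtZZ (F : Set (List A)) : Prop :=
  F.Nonempty ∧ (∀ l ∈ F, D.IsMaxZZ l) ∧
  ∀ l1 ∈ F, ∀ l2 ∈ F,
    Relation.ReflTransGen (fun x y : List A => x ∈ F ∧ y ∈ F ∧ Intersects x y) l1 l2

def IsMaxExtZZ (F : Set (List A)) : Prop :=
  D.IsExtZZ F ∧ ∀ G : Set (List A), D.IsExtZZ G → F ⊆ G → G = F

def VertsOf (F : Set (List A)) : Set V :=
  {w : V | ∃ e ∈ ArcsOf F, D.tail e = w ∨ D.head e = w}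

/-- The free endpoint of an extremal arc of a trail. -/
noncomputable def frontEnd (x : A) : V := if D.IsRetic (D.tail x) then D.tail x else D.head x

/-- Endpoints of a zig-zag trail. -/
def EndsSet (l : List A) : Set V :=
  {w : V | (∃ x, l.head? = some x ∧ w = D.frontEnd x) ∨ (∃ y, l.getLast? = some y ∧ w = D.frontEnd y)}

/-- `s` is the arc set of a crown contained in (the arcs of) `F`. -/
def CrownIn (F : Set (List A)) (s : Set A) : Prop :=
  ∃ m : List A, D.IsCrownCycle m ∧ {e : A | e ∈ m} = s ∧ s ⊆ ArcsOf F

/-- Endpoints of an extended zig-zag trail (from its non-crown constituents). -/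
def EndSetF (F : Set (List A)) : Set V :=
  {w : V | ∃ l ∈ F, ¬ D.ContainsCrown l ∧ w ∈ D.EndsSet l}

def NoCrownsIn (F : Set (List A)) : Prop := ¬ ∃ s : Set A, D.CrownIn F s

def IsGenNFence (F : Set (List A)) : Prop :=
  D.IsMaxExtZZ F ∧ D.NoCrownsIn F ∧ ∃! u : V, u ∈ D.EndSetF F ∧ D.IsRetic u

def IsGenMFence (F : Set (List A)) : Prop :=
  D.IsMaxExtZZ F ∧ D.NoCrownsIn F ∧ ∀ w ∈ D.EndSetF F, D.IsTreeNode w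

def IsGenCrown (F : Set (List A)) : Prop :=
  D.IsMaxExtZZ F ∧ (∃! s : Set A, D.CrownIn F s) ∧ ∀ w ∈ D.EndSetF F, D.IsTreeNode w

end MGraph

/-- A crown (a 0, …, a (k−1)) (0-based; tails pair as (0,1),(2,3),…,
heads pair as (1,2),(3,4),…,(k−1,0)) of a binary tree-based network, together with
the outgoing arcs cc j of its reticulations, can be covered by reticulated cherry
shapes in exactly the two explicitly given ways. -/
theorem stmt7 {V A : Type} [Fintype V] [Fintype A] [DecidableEq V] [DecidableEq A]
    (D : MGraph V A) (hbin : D.IsBinary) (htb : D.IsTreeBased)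
    (k : ℕ) (hk : 4 ≤ k) (heven : Even k) (a : ℕ → A) (cc : ℕ → A)
    (hmax : D.IsMaxZZ (List.ofFn (fun i : Fin k => a i)))
    (hpat1 : ∀ j, 2*j+1 < k → D.tail (a (2*j)) = D.tail (a (2*j+1)))
    (hpat2 : ∀ j, 2*j+2 < k → D.head (a (2*j+1)) = D.head (a (2*j+2)))
    (hclose : D.head (a 0) = D.head (a (k-1)))
    (hcc : ∀ j, 1 ≤ j → 2*j ≤ k → D.tail (cc j) = D.head (a (2*j-1))) :
    ∀ T : Set A,
      T = {e : A | (∃ i < k, e = a i) ∨ ∃ j, 1 ≤ j ∧ 2*j ≤ k ∧ e = cc j} →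
      ∀ Q1 Q2 : Finset (Finset A),
        Q1 = insert ({cc (k/2), a 0, a 1} : Finset A)
            ((Finset.range (k/2 - 1)).image
              (fun t => ({cc (t+1), a (2*t+2), a (2*t+3)} : Finset A))) →
        Q2 = (Finset.range (k/2)).image
            (fun t => ({cc (t+1), a (2*t+1), a (2*t)} : Finset A)) →
        Q1 ≠ Q2 ∧
        {Q : Finset (Finset A) | D.CoversExactlyRC D.IsTreeNode D.IsRetic T Q}
          = {Q1, Q2} := by
  classical
  intro T hT Q1 Q2 hQ1 hQ2
  obtain ⟨m, hm⟩ := heven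
  set n := k / 2 with hndef
  have hk2 : k = 2 * n := by omega
  have hn2 : 2 ≤ n := by omega
  obtain ⟨⟨⟨hacyc, hnopar, hroot, hclass⟩, htree2⟩, hret2⟩ := hbin
  -- injectivity of a on [0,k)
  have hnodup : Function.Injective (fun i : Fin k => a i) := by
    have h := hmax.1.2.1
    rwa [List.nodup_ofFn] at h
  have ainj : ∀ i j : ℕ, i < k → j < k → a i = a j → i = j := by
    intro i j hi hj h
    have h2 : (⟨i, hi⟩ : Fin k) = ⟨j, hj⟩ := hnodup h
    simpa using h2
  -- degree/classification helpers
  have retic_of : ∀ x y : A, x ≠ y → D.head x = D.head y → D.IsRetic (D.head y) := by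
    intro x y hxy h
    have h2 : 2 ≤ D.indeg (D.head y) := by
      have : 1 < Fintype.card {e : A // D.head e = D.head y} :=
        Fintype.one_lt_card_iff.mpr ⟨⟨x, h⟩, ⟨y, rfl⟩, by simpa [Subtype.ext_iff] using hxy⟩
      exact this
    rcases hclass (D.head y) with h0 | h0 | h0 | h0
    · exfalso; have := h0.1; omega
    · exfalso; have := h0.1; omega
    · exfalso; have := h0.1; omega
    · exact h0
  have tree_of : ∀ x y : A, x ≠ y → D.tail x = D.tail y → D.IsTreeNode (D.tail y) := by
    intro x y hxy h
    have h2 : 2 ≤ D.outdeg (D.tail y) := by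
      have : 1 < Fintype.card {e : A // D.tail e = D.tail y} :=
        Fintype.one_lt_card_iff.mpr ⟨⟨x, h⟩, ⟨y, rfl⟩, by simpa [Subtype.ext_iff] using hxy⟩
      exact this
    rcases hclass (D.tail y) with h0 | h0 | h0 | h0
    · exfalso; have := h0.2; omega
    · exfalso; have := h0.2; omega
    · exact h0
    · exfalso; have := h0.2; omega
  have not_retic_tree : ∀ v : V, D.IsRetic v → D.IsTreeNode v → False := by
    intro v h1 h2
    have := h1.1; have := h2.1; omega
  have head_pin : ∀ x y z : A, x ≠ y → D.head x = D.head y → D.head z = D.head y →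
      z = x ∨ z = y := by
    intro x y z hxy hx hz
    by_contra hcon
    push_neg at hcon
    obtain ⟨hzx, hzy⟩ := hcon
    have h2 : Fintype.card {e : A // D.head e = D.head y} = 2 :=
      hret2 _ (retic_of x y hxy hx)
    have h3 : 2 < Fintype.card {e : A // D.head e = D.head y} :=
      Fintype.two_lt_card_iff.mpr ⟨⟨z, hz⟩, ⟨x, hx⟩, ⟨y, rfl⟩,
        by simpa [Subtype.ext_iff] using hzx, by simpa [Subtype.ext_iff] using hzy,
        by simpa [Subtype.ext_iff] using hxy⟩
    omega
  have tail_pin0 : ∀ x y z : A, x ≠ y → D.tail x = D.tail y → D.tail z = D.tail y →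
      z = x ∨ z = y := by
    intro x y z hxy hx hz
    by_contra hcon
    push_neg at hcon
    obtain ⟨hzx, hzy⟩ := hcon
    have h2 : Fintype.card {e : A // D.tail e = D.tail y} = 2 :=
      htree2 _ (tree_of x y hxy hx)
    have h3 : 2 < Fintype.card {e : A // D.tail e = D.tail y} :=
      Fintype.two_lt_card_iff.mpr ⟨⟨z, hz⟩, ⟨x, hx⟩, ⟨y, rfl⟩,
        by simpa [Subtype.ext_iff] using hzx, by simpa [Subtype.ext_iff] using hzy,
        by simpa [Subtype.ext_iff] using hxy⟩
    omega
  -- index arithmetic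
  have he2i : ∀ t, t < n → ((2*t+2) % k = 2*t+2 ∧ t+1 < n) ∨ ((2*t+2) % k = 0 ∧ t+1 = n) := by
    intro t ht
    by_cases h : t + 1 = n
    · right; exact ⟨by rw [show 2*t+2 = k by omega, Nat.mod_self], h⟩
    · left; exact ⟨Nat.mod_eq_of_lt (by omega), by omega⟩
  have he3i : ∀ t, t < n → ((2*t+3) % k = 2*t+3 ∧ t+1 < n) ∨ ((2*t+3) % k = 1 ∧ t+1 = n) := by
    intro t ht
    by_cases h : t + 1 = n
    · right
      refine ⟨?_, h⟩
      rw [show 2*t+3 = k+1 by omega, Nat.add_mod_left, Nat.mod_eq_of_lt (by omega)]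
    · left; exact ⟨Nat.mod_eq_of_lt (by omega), by omega⟩
  have he2lt : ∀ t, t < n → (2*t+2) % k < k := by
    intro t ht; rcases he2i t ht with ⟨h, h'⟩ | ⟨h, h'⟩ <;> omega
  have he3lt : ∀ t, t < n → (2*t+3) % k < k := by
    intro t ht; rcases he3i t ht with ⟨h, h'⟩ | ⟨h, h'⟩ <;> omega
  -- trail structure facts
  have htp : ∀ t, t < n → D.tail (a (2*t)) = D.tail (a (2*t+1)) := by
    intro t ht; exact hpat1 t (by omega)
  have hcc' : ∀ t, t < n → D.tail (cc (t+1)) = D.head (a (2*t+1)) := by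
    intro t ht
    have h := hcc (t+1) (by omega) (by omega)
    rwa [show 2*(t+1)-1 = 2*t+1 by omega] at h
  have hht : ∀ t, t < n → D.head (a (2*t+1)) = D.head (a ((2*t+2) % k)) := by
    intro t ht
    rcases he2i t ht with ⟨h, h'⟩ | ⟨h, h'⟩
    · rw [h]; exact hpat2 t (by omega)
    · rw [h, show 2*t+1 = k-1 by omega]; exact hclose.symm
  have htp2 : ∀ t, t < n → D.tail (a ((2*t+2) % k)) = D.tail (a ((2*t+3) % k)) := by
    intro t ht
    rcases he2i t ht with ⟨h, h'⟩ | ⟨h, h'⟩ <;> rcases he3i t ht with ⟨h2, h2'⟩ | ⟨h2, h2'⟩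
    · rw [h, h2, show 2*t+2 = 2*(t+1) by omega, show 2*t+3 = 2*(t+1)+1 by omega]
      exact htp (t+1) (by omega)
    · omega
    · omega
    · rw [h, h2]
      have := htp 0 (by omega)
      simpa using this
  have treeT : ∀ t, t < n → D.IsTreeNode (D.tail (a (2*t+1))) := by
    intro t ht
    exact tree_of (a (2*t)) (a (2*t+1))
      (fun h => by have := ainj _ _ (by omega) (by omega) h; omega) (htp t ht)
  have allTree : ∀ i, i < k → D.IsTreeNode (D.tail (a i)) := by
    intro i hi
    rcases Nat.even_or_odd i with ⟨t, h⟩ | ⟨t, h⟩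
    · rw [show i = 2*t by omega, htp t (by omega)]
      exact treeT t (by omega)
    · rw [show i = 2*t+1 by omega]
      exact treeT t (by omega)
  have reticR : ∀ t, t < n → D.IsRetic (D.head (a (2*t+1))) := by
    intro t ht
    refine retic_of (a ((2*t+2) % k)) (a (2*t+1)) ?_ (hht t ht).symm
    intro h
    have := ainj _ _ (he2lt t ht) (by omega) h
    rcases he2i t ht with ⟨h2, h2'⟩ | ⟨h2, h2'⟩ <;> omega
  have headPin : ∀ t, t < n → ∀ z : A, D.head z = D.head (a (2*t+1)) →
      z = a ((2*t+2) % k) ∨ z = a (2*t+1) := by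
    intro t ht z hz
    refine head_pin (a ((2*t+2) % k)) (a (2*t+1)) z ?_ (hht t ht).symm hz
    intro h
    have := ainj _ _ (he2lt t ht) (by omega) h
    rcases he2i t ht with ⟨h2, h2'⟩ | ⟨h2, h2'⟩ <;> omega
  have tailPin : ∀ t, t < n → ∀ z : A, D.tail z = D.tail (a (2*t+1)) →
      z = a (2*t) ∨ z = a (2*t+1) := by
    intro t ht z hz
    refine tail_pin0 (a (2*t)) (a (2*t+1)) z ?_ (htp t ht) hz
    intro h
    have := ainj _ _ (by omega) (by omega) h; omega
  have ccRet : ∀ t, t < n → D.IsRetic (D.tail (cc (t+1))) := by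
    intro t ht; rw [hcc' t ht]; exact reticR t ht
  have cc_ne_a : ∀ t, t < n → ∀ i, i < k → cc (t+1) ≠ a i := by
    intro t ht i hi heq
    have h1 := ccRet t ht
    rw [heq] at h1
    exact not_retic_tree _ h1 (allTree i hi)
  have Rinj : ∀ t t', t < n → t' < n →
      D.head (a (2*t+1)) = D.head (a (2*t'+1)) → t = t' := by
    intro t t' ht ht' h
    rcases headPin t ht (a (2*t'+1)) h.symm with h1 | h1
    · have := ainj _ _ (by omega) (he2lt t ht) h1
      rcases he2i t ht with ⟨h2, h2'⟩ | ⟨h2, h2'⟩ <;> omega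
    · have := ainj _ _ (by omega) (by omega) h1; omega
  have ccinj : ∀ t t', t < n → t' < n → cc (t+1) = cc (t'+1) → t = t' := by
    intro t t' ht ht' h
    refine Rinj t t' ht ht' ?_
    rw [← hcc' t ht, ← hcc' t' ht', h]
  -- the two shape families
  set SA : ℕ → Finset A := fun t => {cc (t+1), a (2*t+1), a (2*t)} with hSA
  set SB : ℕ → Finset A := fun t => {cc (t+1), a ((2*t+2) % k), a ((2*t+3) % k)} with hSB
  have memA_a : ∀ t, t < n → ∀ i, i < k → (a i ∈ SA t ↔ i = 2*t+1 ∨ i = 2*t) := by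
    intro t ht i hi
    simp only [hSA, Finset.mem_insert, Finset.mem_singleton]
    constructor
    · rintro (h | h | h)
      · exact absurd h.symm (cc_ne_a t ht i hi)
      · exact Or.inl (ainj i _ hi (by omega) h)
      · exact Or.inr (ainj i _ hi (by omega) h)
    · rintro (rfl | rfl) <;> simp
  have memB_a : ∀ t, t < n → ∀ i, i < k →
      (a i ∈ SB t ↔ i = (2*t+2) % k ∨ i = (2*t+3) % k) := by
    intro t ht i hi
    simp only [hSB, Finset.mem_insert, Finset.mem_singleton]
    constructor
    · rintro (h | h | h)
      · exact absurd h.symm (cc_ne_a t ht i hi)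
      · exact Or.inl (ainj i _ hi (he2lt t ht) h)
      · exact Or.inr (ainj i _ hi (he3lt t ht) h)
    · rintro (rfl | rfl) <;> simp
  have memA_cc : ∀ t, t < n → ∀ t', t' < n → (cc (t'+1) ∈ SA t ↔ t' = t) := by
    intro t ht t' ht'
    simp only [hSA, Finset.mem_insert, Finset.mem_singleton]
    constructor
    · rintro (h | h | h)
      · exact ccinj t' t ht' ht h
      · exact absurd h (cc_ne_a t' ht' _ (by omega))
      · exact absurd h (cc_ne_a t' ht' _ (by omega))
    · rintro rfl; simp
  have memB_cc : ∀ t, t < n → ∀ t', t' < n → (cc (t'+1) ∈ SB t ↔ t' = t) := by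
    intro t ht t' ht'
    simp only [hSB, Finset.mem_insert, Finset.mem_singleton]
    constructor
    · rintro (h | h | h)
      · exact ccinj t' t ht' ht h
      · exact absurd h (cc_ne_a t' ht' _ (he2lt t ht))
      · exact absurd h (cc_ne_a t' ht' _ (he3lt t ht))
    · rintro rfl; simp
  have SA_ne_SB : ∀ t t', t < n → t' < n → SA t ≠ SB t' := by
    intro t t' ht ht' h
    have hc : cc (t+1) ∈ SB t' := by rw [← h]; simp [hSA]
    have htt : t = t' := (memB_cc t' ht' t ht).mp hc
    subst htt
    have hm : a (2*t) ∈ SB t := by rw [← h]; simp [hSA]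
    rw [memB_a t ht (2*t) (by omega)] at hm
    rcases he2i t ht with ⟨h2, h2'⟩ | ⟨h2, h2'⟩ <;>
      rcases he3i t ht with ⟨h3, h3'⟩ | ⟨h3, h3'⟩ <;> omega
  -- pin-down of parallel index pairs
  have pbEq : ∀ u u', u < n → u' < n → ∀ i, i < k →
      (i = (2*u+2) % k ∨ i = (2*u+3) % k) → (i = (2*u'+2) % k ∨ i = (2*u'+3) % k) →
      u = u' := by
    intro u u' hu hu' i hi h1 h2
    rcases he2i u hu with ⟨h3, h3'⟩ | ⟨h3, h3'⟩ <;>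
      rcases he3i u hu with ⟨h4, h4'⟩ | ⟨h4, h4'⟩ <;>
      rcases he2i u' hu' with ⟨h5, h5'⟩ | ⟨h5, h5'⟩ <;>
      rcases he3i u' hu' with ⟨h6, h6'⟩ | ⟨h6, h6'⟩ <;>
      rcases h1 with rfl | rfl <;> rcases h2 with h2 | h2 <;> omega
  have pb : ∀ t, t < n → ∃ u, u < n ∧ (2*u+2) % k = 2*t ∧ (2*u+3) % k = 2*t+1 := by
    intro t ht
    by_cases h : t = 0
    · refine ⟨n-1, by omega, ?_, ?_⟩
      · rcases he2i (n-1) (by omega) with ⟨h2, h2'⟩ | ⟨h2, h2'⟩ <;> omega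
      · rcases he3i (n-1) (by omega) with ⟨h2, h2'⟩ | ⟨h2, h2'⟩ <;> omega
    · refine ⟨t-1, by omega, ?_, ?_⟩
      · rcases he2i (t-1) (by omega) with ⟨h2, h2'⟩ | ⟨h2, h2'⟩ <;> omega
      · rcases he3i (t-1) (by omega) with ⟨h2, h2'⟩ | ⟨h2, h2'⟩ <;> omega
  -- the shapes are RC shapes
  have shapeA : ∀ t, t < n →
      D.IsRCShapeMid D.IsTreeNode D.IsRetic (SA t) (a (2*t+1)) := by
    intro t ht
    refine ⟨cc (t+1), a (2*t), cc_ne_a t ht _ (by omega), cc_ne_a t ht _ (by omega),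
      fun h => by have := ainj _ _ (by omega) (by omega) h; omega,
      by simp [hSA], (hcc' t ht).symm, (htp t ht).symm, ccRet t ht, treeT t ht⟩
  have shapeB : ∀ t, t < n →
      D.IsRCShapeMid D.IsTreeNode D.IsRetic (SB t) (a ((2*t+2) % k)) := by
    intro t ht
    refine ⟨cc (t+1), a ((2*t+3) % k), cc_ne_a t ht _ (he2lt t ht),
      cc_ne_a t ht _ (he3lt t ht), ?_, by simp [hSB], ?_, htp2 t ht, ccRet t ht, ?_⟩
    · intro h
      have := ainj _ _ (he2lt t ht) (he3lt t ht) h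
      rcases he2i t ht with ⟨h2, h2'⟩ | ⟨h2, h2'⟩ <;>
        rcases he3i t ht with ⟨h3, h3'⟩ | ⟨h3, h3'⟩ <;> omega
    · rw [hcc' t ht]; exact (hht t ht).symm
    · exact allTree _ (he2lt t ht)
  -- Q1, Q2 as images
  have hQ2' : Q2 = (Finset.range n).image SA := by rw [hQ2]
  have SBlo : ∀ t, t + 1 < n → SB t = {cc (t+1), a (2*t+2), a (2*t+3)} := by
    intro t ht
    simp only [hSB]
    rw [Nat.mod_eq_of_lt (by omega), Nat.mod_eq_of_lt (by omega)]
  have SBhi : SB (n-1) = {cc n, a 0, a 1} := by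
    simp only [hSB]
    rw [show 2*(n-1)+2 = k by omega, show 2*(n-1)+3 = k+1 by omega, Nat.mod_self,
      Nat.add_mod_left, Nat.mod_eq_of_lt (by omega), show n-1+1 = n by omega]
  have hQ1' : Q1 = (Finset.range n).image SB := by
    rw [hQ1]
    ext s
    simp only [Finset.mem_insert, Finset.mem_image, Finset.mem_range]
    constructor
    · rintro (rfl | ⟨t, ht, rfl⟩)
      · exact ⟨n-1, by omega, SBhi⟩
      · exact ⟨t, by omega, SBlo t (by omega)⟩
    · rintro ⟨t, ht, rfl⟩
      by_cases h : t + 1 = n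
      · left; rw [show t = n-1 by omega, SBhi]
      · right; exact ⟨t, by omega, (SBlo t (by omega)).symm⟩
  -- Q1 is a cover
  have coverB : D.CoversExactlyRC D.IsTreeNode D.IsRetic T ((Finset.range n).image SB) := by
    refine ⟨?_, ?_, ?_⟩
    · intro s hs
      rw [Finset.mem_image] at hs
      obtain ⟨t, ht, rfl⟩ := hs
      exact ⟨_, shapeB t (Finset.mem_range.mp ht)⟩
    · intro s hs e he
      rw [Finset.mem_image] at hs
      obtain ⟨t, ht, rfl⟩ := hs
      rw [Finset.mem_range] at ht
      rw [hT]
      simp only [hSB, Finset.mem_insert, Finset.mem_singleton] at he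
      rcases he with rfl | rfl | rfl
      · exact Or.inr ⟨t+1, by omega, by omega, rfl⟩
      · exact Or.inl ⟨(2*t+2) % k, he2lt t ht, rfl⟩
      · exact Or.inl ⟨(2*t+3) % k, he3lt t ht, rfl⟩
    · intro e heT
      rw [hT] at heT
      simp only [Set.mem_setOf_eq] at heT
      rcases heT with ⟨i, hi, rfl⟩ | ⟨j, hj1, hj2, rfl⟩
      · have ht2 : i / 2 < n := by omega
        obtain ⟨u, hu, hu2, hu3⟩ := pb (i/2) ht2
        refine ⟨SB u, ⟨Finset.mem_image_of_mem _ (Finset.mem_range.mpr hu), ?_⟩, ?_⟩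
        · rw [memB_a u hu i hi]; omega
        · rintro s ⟨hs, hmem⟩
          rw [Finset.mem_image] at hs
          obtain ⟨u', hu', rfl⟩ := hs
          rw [Finset.mem_range] at hu'
          rw [memB_a u' hu' i hi] at hmem
          exact congrArg SB (pbEq u' u hu' hu i hi hmem (by omega))
      · have htj : j - 1 < n := by omega
        have hj : j = (j-1) + 1 := by omega
        refine ⟨SB (j-1), ⟨Finset.mem_image_of_mem _ (Finset.mem_range.mpr htj), ?_⟩, ?_⟩
        · rw [hj]; simp [hSB]
        · rintro s ⟨hs, hmem⟩
          rw [Finset.mem_image] at hs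
          obtain ⟨u', hu', rfl⟩ := hs
          rw [Finset.mem_range] at hu'
          rw [hj, memB_cc u' hu' (j-1) htj] at hmem
          rw [hmem]
  -- Q2 is a cover
  have coverA : D.CoversExactlyRC D.IsTreeNode D.IsRetic T ((Finset.range n).image SA) := by
    refine ⟨?_, ?_, ?_⟩
    · intro s hs
      rw [Finset.mem_image] at hs
      obtain ⟨t, ht, rfl⟩ := hs
      exact ⟨_, shapeA t (Finset.mem_range.mp ht)⟩
    · intro s hs e he
      rw [Finset.mem_image] at hs
      obtain ⟨t, ht, rfl⟩ := hs
      rw [Finset.mem_range] at ht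
      rw [hT]
      simp only [hSA, Finset.mem_insert, Finset.mem_singleton] at he
      rcases he with rfl | rfl | rfl
      · exact Or.inr ⟨t+1, by omega, by omega, rfl⟩
      · exact Or.inl ⟨2*t+1, by omega, rfl⟩
      · exact Or.inl ⟨2*t, by omega, rfl⟩
    · intro e heT
      rw [hT] at heT
      simp only [Set.mem_setOf_eq] at heT
      rcases heT with ⟨i, hi, rfl⟩ | ⟨j, hj1, hj2, rfl⟩
      · have ht2 : i / 2 < n := by omega
        refine ⟨SA (i/2), ⟨Finset.mem_image_of_mem _ (Finset.mem_range.mpr ht2), ?_⟩, ?_⟩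
        · rw [memA_a (i/2) ht2 i hi]; omega
        · rintro s ⟨hs, hmem⟩
          rw [Finset.mem_image] at hs
          obtain ⟨u', hu', rfl⟩ := hs
          rw [Finset.mem_range] at hu'
          rw [memA_a u' hu' i hi] at hmem
          exact congrArg SA (by omega)
      · have htj : j - 1 < n := by omega
        have hj : j = (j-1) + 1 := by omega
        refine ⟨SA (j-1), ⟨Finset.mem_image_of_mem _ (Finset.mem_range.mpr htj), ?_⟩, ?_⟩
        · rw [hj]; simp [hSA]
        · rintro s ⟨hs, hmem⟩
          rw [Finset.mem_image] at hs
          obtain ⟨u', hu', rfl⟩ := hs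
          rw [Finset.mem_range] at hu'
          rw [hj, memA_cc u' hu' (j-1) htj] at hmem
          rw [hmem]
  constructor
  · -- Q1 ≠ Q2
    rw [hQ1', hQ2']
    intro h
    have h0 : SA 0 ∈ (Finset.range n).image SB := by
      rw [h]
      exact Finset.mem_image_of_mem _ (Finset.mem_range.mpr (by omega))
    rw [Finset.mem_image] at h0
    obtain ⟨u, hu, h0⟩ := h0
    rw [Finset.mem_range] at hu
    have hc : cc (0+1) ∈ SB u := by rw [h0]; simp [hSA]
    have h0u : 0 = u := (memB_cc u hu 0 (by omega)).mp hc
    subst h0u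
    have hm : a 0 ∈ SB 0 := by
      rw [h0]
      have : a (2*0) ∈ SA 0 := by simp [hSA]
      simpa using this
    rw [memB_a 0 (by omega) 0 (by omega)] at hm
    rcases he2i 0 (by omega) with ⟨h2, h2'⟩ | ⟨h2, h2'⟩ <;>
      rcases he3i 0 (by omega) with ⟨h3, h3'⟩ | ⟨h3, h3'⟩ <;> omega
  · -- the set of covers is exactly {Q1, Q2}
    ext Q
    simp only [Set.mem_setOf_eq, Set.mem_insert_iff, Set.mem_singleton_iff]
    constructor
    · rintro ⟨hQa, hQb, hQc⟩
      -- classification of shapes in Q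
      have classify : ∀ s ∈ Q, ∃ t, t < n ∧ (s = SA t ∨ s = SB t) := by
        intro s hs
        obtain ⟨mid, bot, top, hbm, hbt, hmt, hseq, hhm, htm, hrt, htn⟩ := hQa s hs
        have hbotT : bot ∈ T := hQb s hs bot (by rw [hseq]; simp)
        rw [hT] at hbotT
        simp only [Set.mem_setOf_eq] at hbotT
        rcases hbotT with ⟨i, hi, rfl⟩ | ⟨j, hj1, hj2, rfl⟩
        · exact absurd hrt (fun h => not_retic_tree _ h (allTree i hi))
        · have ht : j - 1 < n := by omega
          have hj : j = (j-1) + 1 := by omega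
          rw [hj] at hhm hrt hseq
          set t := j - 1
          have hmid : mid = a ((2*t+2) % k) ∨ mid = a (2*t+1) :=
            headPin t ht mid (by rw [hhm, hcc' t ht])
          rcases hmid with rfl | rfl
          · obtain ⟨u, hu, hu2, hu3⟩ : ∃ u, u < n ∧ (2*t+2) % k = 2*u ∧ (2*t+3) % k = 2*u+1 := by
              rcases he2i t ht with ⟨h2, h2'⟩ | ⟨h2, h2'⟩
              · exact ⟨t+1, by omega, by omega, by
                  rcases he3i t ht with ⟨h3, h3'⟩ | ⟨h3, h3'⟩ <;> omega⟩
              · exact ⟨0, by omega, by omega, by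
                  rcases he3i t ht with ⟨h3, h3'⟩ | ⟨h3, h3'⟩ <;> omega⟩
            have htop : top = a (2*u) ∨ top = a (2*u+1) :=
              tailPin u hu top (by rw [← htm, hu2, htp u hu])
            rcases htop with rfl | rfl
            · exact absurd (by rw [hu2]) hmt
            · refine ⟨t, ht, Or.inr ?_⟩
              rw [hseq]
              simp only [hSB]
              rw [hu3]
          · have htop : top = a (2*t) ∨ top = a (2*t+1) := tailPin t ht top (by rw [← htm])
            rcases htop with rfl | rfl
            · exact ⟨t, ht, Or.inl (by rw [hseq])⟩
            · exact absurd rfl hmt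
      have hccT : ∀ t, t < n → cc (t+1) ∈ T := by
        intro t ht
        rw [hT]
        exact Or.inr ⟨t+1, by omega, by omega, rfl⟩
      have hccQ : ∀ t, t < n → SA t ∈ Q ∨ SB t ∈ Q := by
        intro t ht
        obtain ⟨s, ⟨hsQ, hsm⟩, -⟩ := hQc _ (hccT t ht)
        obtain ⟨u, hu, hsu⟩ := classify s hsQ
        rcases hsu with rfl | rfl
        · left; rw [(memA_cc u hu t ht).mp hsm]; exact hsQ
        · right; rw [(memB_cc u hu t ht).mp hsm]; exact hsQ
      have hnotboth : ∀ t, t < n → ¬ (SA t ∈ Q ∧ SB t ∈ Q) := by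
        rintro t ht ⟨h1, h2⟩
        obtain ⟨s, -, huniq⟩ := hQc _ (hccT t ht)
        have e1 := huniq (SA t) ⟨h1, by simp [hSA]⟩
        have e2 := huniq (SB t) ⟨h2, by simp [hSB]⟩
        exact SA_ne_SB t t ht ht (e1.trans e2.symm)
      have hlink : ∀ t, t < n → ∀ u, u < n → (2*u+2) % k = 2*t →
          (SA t ∈ Q ↔ SB u ∉ Q) := by
        intro t ht u hu hu2
        have haT : a (2*t) ∈ T := by
          rw [hT]; exact Or.inl ⟨2*t, by omega, rfl⟩
        obtain ⟨s, ⟨hsQ, hsm⟩, huniq⟩ := hQc _ haT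
        constructor
        · intro hA hB
          have e1 := huniq (SA t) ⟨hA, by rw [memA_a t ht (2*t) (by omega)]; omega⟩
          have e2 := huniq (SB u) ⟨hB, by rw [memB_a u hu (2*t) (by omega)]; omega⟩
          exact SA_ne_SB t u ht hu (e1.trans e2.symm)
        · intro hB
          obtain ⟨u', hu', hsu⟩ := classify s hsQ
          rcases hsu with rfl | rfl
          · have hh := (memA_a u' hu' (2*t) (by omega)).mp hsm
            have : t = u' := by omega
            rw [this]; exact hsQ
          · exfalso
            have hh := (memB_a u' hu' (2*t) (by omega)).mp hsm
            have huu : u' = u := pbEq u' u hu' hu (2*t) (by omega) hh (Or.inl hu2.symm)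
            rw [huu] at hsQ
            exact hB hsQ
      have hconst : ∀ t, t < n → (SA t ∈ Q ↔ SA 0 ∈ Q) := by
        intro t
        induction t with
        | zero => intro _; exact Iff.rfl
        | succ t ih =>
          intro ht
          have h1 : (2*t+2) % k = 2*(t+1) := by
            rcases he2i t (by omega) with ⟨h, h'⟩ | ⟨h, h'⟩ <;> omega
          have h2 := hlink (t+1) ht t (by omega) h1
          have h3 : (SB t ∉ Q) ↔ (SA t ∈ Q) := by
            constructor
            · intro h
              rcases hccQ t (by omega) with h' | h'
              · exact h'
              · exact absurd h' h
            · intro h h'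
              exact hnotboth t (by omega) ⟨h, h'⟩
          rw [h2, h3, ih (by omega)]
      by_cases hP : SA 0 ∈ Q
      · right
        rw [hQ2']
        apply Finset.ext
        intro s
        simp only [Finset.mem_image, Finset.mem_range]
        constructor
        · intro hs
          obtain ⟨u, hu, hsu⟩ := classify s hs
          rcases hsu with rfl | rfl
          · exact ⟨u, hu, rfl⟩
          · exfalso
            exact hnotboth u hu ⟨(hconst u hu).mpr hP, hs⟩
        · rintro ⟨u, hu, rfl⟩
          exact (hconst u hu).mpr hP
      · left
        rw [hQ1']
        apply Finset.ext
        intro s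
        simp only [Finset.mem_image, Finset.mem_range]
        constructor
        · intro hs
          obtain ⟨u, hu, hsu⟩ := classify s hs
          rcases hsu with rfl | rfl
          · exact absurd ((hconst u hu).mp hs) hP
          · exact ⟨u, hu, rfl⟩
        · rintro ⟨u, hu, rfl⟩
          rcases hccQ u hu with h' | h'
          · exact absurd ((hconst u hu).mp h') hP
          · exact h'
    · rintro (rfl | rfl)
      · rw [hQ1']; exact coverB
      · rw [hQ2']; exact coverA
end

section
/- Any non-binary phylogenetic network has a unique extended fence decomposition: the set of maximal extended zig-zag trails partitions the set of all maximal zig-zag trails, and every arc other than the root arc is contained in a trail of exactly one maximal extended zig-zag trail. -/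
open Classical

section Aux

variable {V A : Type} [Fintype V] [Fintype A] [DecidableEq V] [DecidableEq A]

lemma aux_zz_single (D : MGraph V A) (e : A) : D.IsZZ [e] := by
  refine ⟨by simp, by simp, Or.inl ⟨?_, ?_⟩⟩
  · intro i x y hx hy
    rw [List.getElem?_eq_none (by simp)] at hy
    cases hy
  · intro i x y hx hy
    rw [List.getElem?_eq_none (by simp)] at hx
    cases hx

lemma aux_exists_maxzz (D : MGraph V A) (e : A) : ∃ l : List A, D.IsMaxZZ l ∧ e ∈ l := by
  classical
  set P : ℕ → Prop := fun n => ∃ l : List A, D.IsZZ l ∧ e ∈ l ∧ l.length = n with hPdef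
  have hP1 : P 1 := ⟨[e], aux_zz_single D e, by simp, rfl⟩
  have hbound : ∀ n, P n → n ≤ Fintype.card A := by
    rintro n ⟨l, hl, -, rfl⟩
    exact hl.2.1.length_le_card
  have hspec : P (Nat.findGreatest P (Fintype.card A)) :=
    Nat.findGreatest_spec (hbound 1 hP1) hP1
  obtain ⟨l, hl, he, hlen⟩ := hspec
  refine ⟨l, ⟨hl, ?_⟩, he⟩
  intro l' hl' hsub
  have h1 : l.length ≤ l'.length := hsub.length_le
  have hP' : P l'.length := ⟨l', hl', hsub.subset he, rfl⟩
  have h2 : l'.length ≤ Nat.findGreatest P (Fintype.card A) := by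
    by_contra h
    exact Nat.findGreatest_is_greatest (by omega) (hbound _ hP') hP'
  have : l.length = l'.length := le_antisymm h1 (by omega)
  exact (hsub.eq_of_length this).symm

/-- Step relation between maximal zig-zag trails. -/
def auxStep (D : MGraph V A) (x y : List A) : Prop :=
  D.IsMaxZZ x ∧ D.IsMaxZZ y ∧ MGraph.Intersects x y

/-- The component of a maximal zig-zag trail. -/
def auxComp (D : MGraph V A) (l : List A) : Set (List A) :=
  {m | Relation.ReflTransGen (auxStep D) l m}

lemma auxStep_symm (D : MGraph V A) : Symmetric (auxStep D) := by
  rintro x y ⟨hx, hy, e, he1, he2⟩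
  exact ⟨hy, hx, e, he2, he1⟩

lemma aux_mem_self (D : MGraph V A) (l : List A) : l ∈ auxComp D l :=
  Relation.ReflTransGen.refl

lemma aux_comp_maxzz (D : MGraph V A) {l m : List A} (hl : D.IsMaxZZ l)
    (hm : m ∈ auxComp D l) : D.IsMaxZZ m := by
  induction hm with
  | refl => exact hl
  | tail _ hstep _ => exact hstep.2.1

/-- Chains within the component can be restricted to any superset `F` of the component. -/
lemma aux_chain_restrict (D : MGraph V A) {l : List A} {F : Set (List A)}
    (hF : auxComp D l ⊆ F) {a b : List A} (ha : a ∈ auxComp D l)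
    (h : Relation.ReflTransGen (auxStep D) a b) :
    Relation.ReflTransGen (fun x y : List A => x ∈ F ∧ y ∈ F ∧ MGraph.Intersects x y) a b := by
  induction h with
  | refl => exact Relation.ReflTransGen.refl
  | @tail c d hac hstep ih =>
    have hc : c ∈ auxComp D l := Relation.ReflTransGen.trans ha hac
    have hd : d ∈ auxComp D l := Relation.ReflTransGen.tail hc hstep
    exact Relation.ReflTransGen.tail ih ⟨hF hc, hF hd, hstep.2.2⟩

lemma aux_comp_connect (D : MGraph V A) {l a b : List A}
    (ha : a ∈ auxComp D l) (hb : b ∈ auxComp D l) :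
    Relation.ReflTransGen (auxStep D) a b :=
  Relation.ReflTransGen.trans
    (by haveI : Std.Symm (auxStep D) := ⟨fun a b h => auxStep_symm D h⟩; exact Std.Symm.symm _ _ ha) hb

lemma aux_comp_extzz (D : MGraph V A) {l : List A} (hl : D.IsMaxZZ l) :
    D.IsExtZZ (auxComp D l) := by
  refine ⟨⟨l, aux_mem_self D l⟩, fun m hm => aux_comp_maxzz D hl hm, ?_⟩
  intro l1 h1 l2 h2
  exact aux_chain_restrict D (fun x hx => hx) h1 (aux_comp_connect D h1 h2)

lemma aux_comp_maxextzz (D : MGraph V A) {l : List A} (hl : D.IsMaxZZ l) :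
    D.IsMaxExtZZ (auxComp D l) := by
  refine ⟨aux_comp_extzz D hl, ?_⟩
  intro G hG hsub
  apply Set.Subset.antisymm _ hsub
  intro m hm
  have hchain := hG.2.2 l (hsub (aux_mem_self D l)) m hm
  have : Relation.ReflTransGen (auxStep D) l m := by
    refine Relation.ReflTransGen.mono ?_ _ _ hchain
    rintro x y ⟨hx, hy, hint⟩
    exact ⟨hG.2.1 x hx, hG.2.1 y hy, hint⟩
  exact this

lemma aux_comp_unique (D : MGraph V A) {l : List A} (hl : D.IsMaxZZ l)
    {F : Set (List A)} (hF : D.IsMaxExtZZ F) (hlF : l ∈ F) : F = auxComp D l := by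
  have hsub : F ⊆ auxComp D l := by
    intro m hm
    have hchain := hF.1.2.2 l hlF m hm
    refine Relation.ReflTransGen.mono ?_ _ _ hchain
    rintro x y ⟨hx, hy, hint⟩
    exact ⟨hF.1.2.1 x hx, hF.1.2.1 y hy, hint⟩
  have hGsub : auxComp D l ⊆ F := by
    have hG : D.IsExtZZ (F ∪ auxComp D l) := by
      refine ⟨⟨l, Or.inl hlF⟩, ?_, ?_⟩
      · rintro m (hm | hm)
        · exact hF.1.2.1 m hm
        · exact aux_comp_maxzz D hl hm
      · intro l1 h1 l2 h2
        have key : ∀ a, a ∈ F ∪ auxComp D l →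
            Relation.ReflTransGen
              (fun x y : List A => x ∈ F ∪ auxComp D l ∧ y ∈ F ∪ auxComp D l ∧
                MGraph.Intersects x y) l a := by
          rintro a (ha | ha)
          · refine Relation.ReflTransGen.mono ?_ _ _ (hF.1.2.2 l hlF a ha)
            rintro x y ⟨hx, hy, hint⟩
            exact ⟨Or.inl hx, Or.inl hy, hint⟩
          · exact aux_chain_restrict D (fun x hx => Or.inr hx) (aux_mem_self D l) ha
        have hsymm : Symmetric (fun x y : List A => x ∈ F ∪ auxComp D l ∧
            y ∈ F ∪ auxComp D l ∧ MGraph.Intersects x y) := by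
          rintro x y ⟨hx, hy, e, he1, he2⟩
          exact ⟨hy, hx, e, he2, he1⟩
        exact Relation.ReflTransGen.trans
          (by haveI : Std.Symm (fun x y : List A => x ∈ F ∪ auxComp D l ∧ y ∈ F ∪ auxComp D l ∧ MGraph.Intersects x y) := ⟨fun a b h => hsymm h⟩; exact Std.Symm.symm _ _ (key l1 h1)) (key l2 h2)
    have := hF.2 _ hG (fun x hx => Or.inl hx)
    intro m hm
    rw [← this]
    exact Or.inr hm
  exact Set.Subset.antisymm hsub hGsub

end Aux

/-- Any non-binary network has a unique extended fence decomposition: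
every maximal zig-zag trail lies in exactly one maximal extended zig-zag trail and
every non-root arc lies in (a trail of) exactly one maximal extended zig-zag trail. -/
theorem stmt9 {V A : Type} [Fintype V] [Fintype A] [DecidableEq V] [DecidableEq A]
    (D : MGraph V A) (hphy : D.IsPhylo) :
    (∀ l : List A, D.IsMaxZZ l → ∃! F : Set (List A), D.IsMaxExtZZ F ∧ l ∈ F) ∧
    (∀ e : A, ¬ D.IsRootArc e →
      ∃! F : Set (List A), D.IsMaxExtZZ F ∧ e ∈ MGraph.ArcsOf F) := by
  constructor
  · intro l hl
    refine ⟨auxComp D l, ⟨aux_comp_maxextzz D hl, aux_mem_self D l⟩, ?_⟩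
    rintro F ⟨hF, hlF⟩
    exact aux_comp_unique D hl hF hlF
  · intro e _
    obtain ⟨l, hl, he⟩ := aux_exists_maxzz D e
    refine ⟨auxComp D l, ⟨aux_comp_maxextzz D hl, l, aux_mem_self D l, he⟩, ?_⟩
    rintro F ⟨hF, m, hmF, hem⟩
    have hm : D.IsMaxZZ m := hF.1.2.1 m hmF
    have h1 : F = auxComp D m := aux_comp_unique D hm hF hmF
    have hml : m ∈ auxComp D l :=
      Relation.ReflTransGen.single ⟨hl, hm, e, he, hem⟩
    have h2 : auxComp D l = auxComp D m :=
      aux_comp_unique D hm (aux_comp_maxextzz D hl) hml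
    rw [h1, h2]
end

section
/- Let N be a semi-binary tree-based network, F a generalized N-fence with efficient covering G = ⋃_{i=1}^k N̂_i where N̂_i = (a^i_1, ..., a^i_{k_i}), and for each i, j let c^i_{2j−1} denote the arc from head(a^i_{2j−1}) to its child. Then every cherry cover of B(N) contains the reticulated cherry shapes {c^i_{2j−1}, a^i_{2j}, a^i_{2j+1}} for all i ∈ [k] and j ∈ [(k_i−1)/2]. -/
open Classical

section Aux

variable {V A : Type} [Fintype V] [Fintype A] [DecidableEq V] [DecidableEq A]
variable (D : MGraph V A)

lemma aux_btail (e : D.BArc) : D.Bulged.tail e = D.tail e.1 := rfl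

lemma aux_bhead (e : D.BArc) : D.Bulged.head e = D.head e.1 := rfl

lemma aux_two_le_indeg {v : V} {x y : A} (hx : D.head x = v) (hy : D.head y = v)
    (hxy : x ≠ y) : 2 ≤ D.indeg v :=
  Fintype.one_lt_card_iff.mpr ⟨⟨x, hx⟩, ⟨y, hy⟩, fun h => hxy (congrArg Subtype.val h)⟩

lemma aux_two_le_outdeg {v : V} {x y : A} (hx : D.tail x = v) (hy : D.tail y = v)
    (hxy : x ≠ y) : 2 ≤ D.outdeg v :=
  Fintype.one_lt_card_iff.mpr ⟨⟨x, hx⟩, ⟨y, hy⟩, fun h => hxy (congrArg Subtype.val h)⟩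

lemma aux_retic (hph : D.IsPhylo) {v : V} (h2 : 2 ≤ D.indeg v) : D.IsRetic v := by
  rcases hph.2.2.2 v with h | h | h | h
  · exact absurd h.1 (by omega)
  · exact absurd h.1 (by omega)
  · exact absurd h.1 (by omega)
  · exact h

lemma aux_tree (hph : D.IsPhylo) {v : V} (h2 : 2 ≤ D.outdeg v) : D.IsTreeNode v := by
  rcases hph.2.2.2 v with h | h | h | h
  · exact absurd h.2 (by omega)
  · exact absurd h.2 (by omega)
  · exact h
  · exact absurd h.2 (by omega)

lemma aux_mult_one {c : A} (h : ¬ D.IsRetic (D.tail c)) : D.bulgeMult c = 1 := by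
  unfold MGraph.bulgeMult
  rw [if_neg h]

lemma aux_barc_eq {x y : D.BArc} (h1 : x.1 = y.1) (hm : D.bulgeMult x.1 = 1) : x = y := by
  obtain ⟨xa, xi⟩ := x; obtain ⟨ya, yi⟩ := y
  simp only at h1 hm
  subst h1
  have h2 : xi.val < 1 := by rw [← hm]; exact xi.isLt
  have h3 : yi.val < 1 := by rw [← hm]; exact yi.isLt
  have hxy : xi = yi := Fin.ext (by omega)
  exact congrArg (Sigma.mk xa) hxy

lemma aux_core (hph : D.IsPhylo) (hout2 : ∀ w : V, D.IsTreeNode w → D.outdeg w = 2)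
    (P : Finset (Finset D.BArc)) (hP : D.IsBulgedCherryCover P)
    (x y z : A)
    (hxy : D.head x = D.head y) (hyz : D.tail y = D.tail z)
    (hxyne : x ≠ y) (hyzne : y ≠ z)
    (hxfree : ∀ s ∈ P, ∀ e ∈ s, D.tail (e : D.BArc).1 = D.head x →
        ∀ m ∈ s, (m : D.BArc).1 ≠ x) :
    ∀ ey ez : D.BArc, ey.1 = y → ez.1 = z →
      ∃ e : D.BArc, D.tail e.1 = D.head x ∧ ({e, ey, ez} : Finset D.BArc) ∈ P := by
  intro ey ez hey hez
  obtain ⟨hP1, hP2, hP3⟩ := hP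
  have hrv : D.IsRetic (D.head x) := aux_retic D hph (aux_two_le_indeg D rfl hxy.symm hxyne)
  have htv : D.IsTreeNode (D.tail y) := aux_tree D hph (aux_two_le_outdeg D rfl hyz.symm hyzne)
  have hvout : D.outdeg (D.tail y) = 2 := hout2 _ htv
  have hnrv : ¬ D.IsRetic (D.tail y) := fun h => by have := htv.1; have := h.1; omega
  have hmulty : D.bulgeMult y = 1 := aux_mult_one D hnrv
  have hmultz : D.bulgeMult z = 1 := aux_mult_one D (by rw [← hyz]; exact hnrv)
  -- the unique out-arc of the reticulation head x
  obtain ⟨c0, hc0⟩ := Fintype.card_eq_one_iff.mp hrv.2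
  have huniqout : ∀ w : A, D.tail w = D.head x → w = c0.1 :=
    fun w hw => congrArg Subtype.val (hc0 ⟨w, hw⟩)
  -- cardinality of the copies of the out-arc
  have hcardT : Fintype.card {e : D.BArc // D.tail e.1 = D.head x} = D.bulgeMult c0.1 := by
    rw [← Fintype.card_fin (D.bulgeMult c0.1)]
    apply Fintype.card_congr
    refine ⟨fun e => Fin.cast (by rw [huniqout e.1.1 e.2]) e.1.2,
            fun j => ⟨⟨c0.1, j⟩, c0.2⟩, ?_, ?_⟩
    · rintro ⟨⟨w, jw⟩, hw⟩
      have hwc : w = c0.1 := huniqout w hw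
      subst hwc
      rfl
    · intro j; rfl
  have hmultc : D.bulgeMult c0.1 = D.indeg (D.head x) - 1 := by
    unfold MGraph.bulgeMult
    rw [if_pos (by rw [c0.2]; exact hrv), c0.2]
  have hcardE : Fintype.card {w : A // D.head w = D.head x ∧ w ≠ x}
      = D.indeg (D.head x) - 1 := by
    classical
    rw [Fintype.card_subtype]
    have hflt : Finset.univ.filter (fun w => D.head w = D.head x ∧ w ≠ x)
        = (Finset.univ.filter (fun w => D.head w = D.head x)).erase x := by
      ext w
      simp [Finset.mem_erase, and_comm]
    rw [hflt, Finset.card_erase_of_mem (by simp)]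
    congr 1
    unfold MGraph.indeg
    exact (Fintype.card_subtype _).symm
  -- every copy of the out-arc is the bottom of an RC shape
  have claimA : ∀ e : D.BArc, D.tail e.1 = D.head x →
      ∃ m tp s, s ∈ P ∧ e ∈ s ∧ s = ({e, m, tp} : Finset D.BArc) ∧
        e ≠ m ∧ e ≠ tp ∧ m ≠ tp ∧
        D.head m.1 = D.head x ∧ D.IsTreeNode (D.tail m.1) ∧ D.tail m.1 = D.tail tp.1 := by
    intro e he
    have hnotroot : ¬ D.IsRootArc e.1 := by
      intro h
      have h0 := h.1
      rw [he] at h0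
      have := hrv.1; omega
    obtain ⟨s, ⟨hsP, hes⟩, -⟩ := hP2 e hnotroot
    rcases hP1 s hsP with hch | hrc
    · exfalso
      obtain ⟨p, q, hpq, hspq, htpq, hhpq⟩ := hch
      have htpq' : D.tail p.1 = D.tail q.1 := htpq
      have hhpq' : D.head p.1 ≠ D.head q.1 := hhpq
      rw [hspq] at hes
      have hptail : D.tail p.1 = D.head x := by
        rcases Finset.mem_insert.mp hes with h | h
        · rw [← h]; exact he
        · rw [htpq', ← Finset.mem_singleton.mp h]; exact he
      have hqtail : D.tail q.1 = D.head x := by rw [← htpq']; exact hptail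
      have hpq1 : p.1 = q.1 := (huniqout p.1 hptail).trans (huniqout q.1 hqtail).symm
      exact hhpq' (by rw [hpq1])
    · obtain ⟨mid, bot, tp, hb1, hb2, hb3, hseq, hmb, hmt, hrtb, htnm⟩ := hrc
      have hmb' : D.head mid.1 = D.tail bot.1 := hmb
      have hmt' : D.tail mid.1 = D.tail tp.1 := hmt
      have htnm' : D.IsTreeNode (D.tail mid.1) := htnm
      have hebot : e = bot := by
        rw [hseq] at hes
        rcases Finset.mem_insert.mp hes with h | h
        · exact h
        rcases Finset.mem_insert.mp h with h | h
        · exfalso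
          rw [h] at he
          rw [he] at htnm'
          have := htnm'.1; have := hrv.1; omega
        · exfalso
          have h := Finset.mem_singleton.mp h
          rw [h] at he
          rw [← hmt'] at he
          rw [he] at htnm'
          have := htnm'.1; have := hrv.1; omega
      subst hebot
      exact ⟨mid, tp, s, hsP, hes, hseq, hb1, hb2, hb3, hmb'.trans he, htnm', hmt'⟩
  choose mid tpf sh hshP hesh hsheq hne1 hne2 hne3 hmidh hmidt hmidtp using claimA
  have hmidnotx : ∀ (e : D.BArc) (he : D.tail e.1 = D.head x), (mid e he).1 ≠ x := by
    intro e he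
    exact hxfree (sh e he) (hshP e he) e (hesh e he) he (mid e he)
      (by rw [hsheq e he]; simp)
  have hmidmult : ∀ (e : D.BArc) (he : D.tail e.1 = D.head x),
      D.bulgeMult (mid e he).1 = 1 :=
    fun e he => aux_mult_one D (fun h => by have := (hmidt e he).1; have := h.1; omega)
  let G : {e : D.BArc // D.tail e.1 = D.head x} → {w : A // D.head w = D.head x ∧ w ≠ x} :=
    fun e => ⟨(mid e.1 e.2).1, hmidh e.1 e.2, hmidnotx e.1 e.2⟩
  have hGinj : Function.Injective G := by
    intro e1 e2 hG
    have hmeq : mid e1.1 e1.2 = mid e2.1 e2.2 :=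
      aux_barc_eq D (congrArg Subtype.val hG) (hmidmult e1.1 e1.2)
    have hnr : ¬ D.IsRootArc (mid e1.1 e1.2).1 := by
      intro h
      have h0 := h.1
      have := (hmidt e1.1 e1.2).1
      omega
    obtain ⟨s', -, huniq⟩ := hP2 (mid e1.1 e1.2) hnr
    have hs1 := huniq (sh e1.1 e1.2) ⟨hshP e1.1 e1.2, by rw [hsheq e1.1 e1.2]; simp⟩
    have hs2 := huniq (sh e2.1 e2.2) ⟨hshP e2.1 e2.2, by rw [hsheq e2.1 e2.2, ← hmeq]; simp⟩
    have hsheq' : sh e1.1 e1.2 = sh e2.1 e2.2 := hs1.trans hs2.symm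
    have he1mem : e1.1 ∈ ({e2.1, mid e2.1 e2.2, tpf e2.1 e2.2} : Finset D.BArc) := by
      rw [← hsheq e2.1 e2.2, ← hsheq']
      exact hesh e1.1 e1.2
    rcases Finset.mem_insert.mp he1mem with h | h
    · exact Subtype.ext h
    exfalso
    rcases Finset.mem_insert.mp h with h | h
    · have h2 := (hmidt e2.1 e2.2).1
      have h3 : D.tail e1.1.1 = D.tail (mid e2.1 e2.2).1 := by rw [h]
      rw [e1.2] at h3
      have := hrv.1
      rw [← h3] at h2
      omega
    · have h := Finset.mem_singleton.mp h
      have h2 := (hmidt e2.1 e2.2).1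
      have h3 : D.tail e1.1.1 = D.tail (tpf e2.1 e2.2).1 := by rw [h]
      rw [e1.2, ← hmidtp e2.1 e2.2] at h3
      have := hrv.1
      rw [← h3] at h2
      omega
  have hcards : Fintype.card {e : D.BArc // D.tail e.1 = D.head x}
      = Fintype.card {w : A // D.head w = D.head x ∧ w ≠ x} := by
    rw [hcardT, hmultc, hcardE]
  have hGbij : Function.Bijective G :=
    (Fintype.bijective_iff_injective_and_card G).mpr ⟨hGinj, hcards⟩
  obtain ⟨e, hGe⟩ := hGbij.2 ⟨y, hxy.symm, hxyne.symm⟩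
  have hGe1 : (mid e.1 e.2).1 = y := congrArg Subtype.val hGe
  have hmid_ey : mid e.1 e.2 = ey :=
    aux_barc_eq D (hGe1.trans hey.symm) (hmidmult e.1 e.2)
  -- identify the top arc
  have houtmem : ∀ w : A, D.tail w = D.tail y → w = y ∨ w = z := by
    intro w hw
    by_contra hcon
    push_neg at hcon
    have h3 : 2 < Fintype.card {b : A // D.tail b = D.tail y} :=
      Fintype.two_lt_card_iff.mpr ⟨⟨w, hw⟩, ⟨y, rfl⟩, ⟨z, hyz.symm⟩,
        fun h => hcon.1 (congrArg Subtype.val h),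
        fun h => hcon.2 (congrArg Subtype.val h),
        fun h => hyzne (congrArg Subtype.val h)⟩
    have h4 : Fintype.card {b : A // D.tail b = D.tail y} = 2 := hvout
    omega
  have htptail : D.tail (tpf e.1 e.2).1 = D.tail y := by
    rw [← hmidtp e.1 e.2, hGe1]
  have htp_cases := houtmem (tpf e.1 e.2).1 htptail
  have htp_ez : tpf e.1 e.2 = ez := by
    rcases htp_cases with h | h
    · exfalso
      have : tpf e.1 e.2 = ey := aux_barc_eq D (h.trans hey.symm)
          (by rw [h]; exact hmulty)
      rw [← hmid_ey] at this
      exact hne3 e.1 e.2 this.symm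
    · exact aux_barc_eq D (h.trans hez.symm) (by rw [h]; exact hmultz)
  refine ⟨e.1, e.2, ?_⟩
  have hfin : sh e.1 e.2 = ({e.1, ey, ez} : Finset D.BArc) := by
    rw [hsheq e.1 e.2, hmid_ey, htp_ez]
  rw [← hfin]
  exact hshP e.1 e.2

end Aux

/-- In a semi-binary tree-based network, for a generalized N-fence F
with efficient covering by maximal N-fences (a i 0, …, a i (kk i − 1)) starting at
the reticulation endpoint u (0-based; heads pair as (0,1),(2,3),…), every cherry
cover of the bulged version contains, for each i and t, the reticulated cherry
shape {e, a i (2t+1), a i (2t+2)} for some copy e of the outgoing arc of the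
reticulation head (a i (2t)). -/
theorem stmt14 {V A : Type} [Fintype V] [Fintype A] [DecidableEq V] [DecidableEq A]
    (D : MGraph V A) (hsb : D.IsSemiBinary) (htb : D.IsTreeBased)
    (F : Set (List A)) (hF : D.IsGenNFence F)
    (k : ℕ) (u : V) (hu : u ∈ D.EndSetF F ∧ D.IsRetic u)
    (kk : Fin k → ℕ) (a : Fin k → ℕ → A)
    (htrail : ∀ i, D.IsMaxZZ (List.ofFn (fun t : Fin (kk i) => a i t)) ∧
      {e : A | ∃ t < kk i, e = a i t} ⊆ MGraph.ArcsOf F ∧ D.tail (a i 0) = u)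
    (hcov : MGraph.ArcsOf F = {e : A | ∃ i, ∃ t < kk i, e = a i t})
    (hpat : ∀ i, 2 ≤ kk i → D.head (a i 0) = D.head (a i 1))
    (P : Finset (Finset D.BArc)) (hP : D.IsBulgedCherryCover P) :
    ∀ (i : Fin k) (t : ℕ), 2*t+2 < kk i →
      ∀ ey ez : D.BArc, ey.1 = a i (2*t+1) → ez.1 = a i (2*t+2) →
        ∃ e : D.BArc, D.tail e.1 = D.head (a i (2*t)) ∧
          ({e, ey, ez} : Finset D.BArc) ∈ P := by
  intro i t0 ht0 ey0 ez0 hey0 hez0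
  have hph : D.IsPhylo := hsb.1
  have hnp : D.NoParallel := hph.2.1
  obtain ⟨hmaxzz, hsub, hu0⟩ := htrail i
  obtain ⟨hlne, hnd, halt⟩ := hmaxzz.1
  have hget : ∀ m, m < kk i →
      (List.ofFn (fun t : Fin (kk i) => a i t))[m]? = some (a i m) := by
    intro m hm
    rw [List.getElem?_ofFn]
    simp [List.ofFnNthVal, hm]
  have hinj : ∀ s t : ℕ, s < kk i → t < kk i → a i s = a i t → s = t := by
    intro s t hs ht heq
    have h2 : (⟨s, hs⟩ : Fin (kk i)) = ⟨t, ht⟩ := List.nodup_ofFn.mp hnd heq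
    exact congrArg Fin.val h2
  have hkey : (∀ j, 2*j+1 < kk i → D.head (a i (2*j)) = D.head (a i (2*j+1))) ∧
      (∀ j, 2*j+2 < kk i → D.tail (a i (2*j+1)) = D.tail (a i (2*j+2))) := by
    rcases halt with ⟨H1, H2⟩ | ⟨H1, H2⟩
    · exact ⟨fun j hj => H1 j _ _ (hget (2*j) (by omega)) (hget (2*j+1) hj),
             fun j hj => H2 j _ _ (hget (2*j+1) (by omega)) (hget (2*j+2) hj)⟩
    · exfalso
      have h01t := H1 0 _ _ (hget (2*0) (by omega)) (hget (2*0+1) (by omega))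
      have h01h := hpat i (by omega)
      have heq := hnp (a i 0) (a i 1) h01t h01h
      have := hinj 0 1 (by omega) (by omega) heq
      omega
  obtain ⟨Hh, Ht⟩ := hkey
  suffices H : ∀ t, 2*t+2 < kk i → ∀ ey ez : D.BArc, ey.1 = a i (2*t+1) →
      ez.1 = a i (2*t+2) →
      ∃ e : D.BArc, D.tail e.1 = D.head (a i (2*t)) ∧
        ({e, ey, ez} : Finset D.BArc) ∈ P by
    exact H t0 ht0 ey0 ez0 hey0 hez0
  intro t
  induction t using Nat.strong_induction_on with
  | _ t IH =>
  intro htn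
  have hxy : D.head (a i (2*t)) = D.head (a i (2*t+1)) := Hh t (by omega)
  have hyz : D.tail (a i (2*t+1)) = D.tail (a i (2*t+2)) := Ht t (by omega)
  have hxyne : a i (2*t) ≠ a i (2*t+1) := fun h => by
    have := hinj _ _ (by omega) (by omega) h; omega
  have hyzne : a i (2*t+1) ≠ a i (2*t+2) := fun h => by
    have := hinj _ _ (by omega) (by omega) h; omega
  have hrv : D.IsRetic (D.head (a i (2*t))) :=
    aux_retic D hph (aux_two_le_indeg D rfl hxy.symm hxyne)
  apply aux_core D hph hsb.2 P hP _ _ _ hxy hyz hxyne hyzne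
  -- it remains to prove `hxfree`
  obtain ⟨hP1, hP2, hP3⟩ := hP
  intro s hsP e hes he m hms hmx
  cases t with
  | zero =>
    have hur : D.head (a i (2*0)) ≠ D.tail (a i (2*0)) := by
      obtain ⟨rank, hrank⟩ := hph.1
      intro h
      have h2 := hrank (a i (2*0))
      rw [h] at h2
      omega
    have hu' : D.IsRetic (D.tail (a i (2*0))) := by
      rw [show (2*0 : ℕ) = 0 from rfl, hu0]
      exact hu.2
    rcases hP1 s hsP with ⟨p, q, hpq, hspq, htpq, hhpq⟩ |
        ⟨mid, bot, tp, hb1, hb2, hb3, hseq, hmb, hmt, hrtb, htnm⟩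
    · -- cherry shape: both tails equal, contradiction with acyclicity
      have htpq' : D.tail p.1 = D.tail q.1 := htpq
      have htails : ∀ w : D.BArc, w ∈ s → D.tail w.1 = D.tail p.1 := by
        intro w hw
        rw [hspq] at hw
        rcases Finset.mem_insert.mp hw with h | h
        · rw [h]
        · rw [Finset.mem_singleton.mp h, htpq']
      apply hur
      calc D.head (a i (2*0)) = D.tail e.1 := he.symm
        _ = D.tail p.1 := htails e hes
        _ = D.tail m.1 := (htails m hms).symm
        _ = D.tail (a i (2*0)) := by rw [hmx]
    · -- RC shape: both e and m must be the bottom arc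
      have hmt' : D.tail mid.1 = D.tail tp.1 := hmt
      have htnm' : D.IsTreeNode (D.tail mid.1) := htnm
      have hbotuniq : ∀ w : D.BArc, w ∈ s → D.IsRetic (D.tail w.1) → w = bot := by
        intro w hw hwret
        rw [hseq] at hw
        rcases Finset.mem_insert.mp hw with h | h
        · exact h
        exfalso
        rcases Finset.mem_insert.mp h with h | h
        · rw [h] at hwret
          have := htnm'.1; have := hwret.1; omega
        · rw [Finset.mem_singleton.mp h] at hwret
          rw [← hmt'] at hwret
          have := htnm'.1; have := hwret.1; omega
      have hebot : e = bot := hbotuniq e hes (by rw [he]; exact hrv)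
      have hmbot : m = bot := hbotuniq m hms (by rw [hmx]; exact hu')
      apply hur
      calc D.head (a i (2*0)) = D.tail e.1 := he.symm
        _ = D.tail bot.1 := by rw [hebot]
        _ = D.tail m.1 := by rw [hmbot]
        _ = D.tail (a i (2*0)) := by rw [hmx]
  | succ t' =>
    have harith : 2*(t'+1) = 2*t'+2 := by omega
    have h2t : 2*t'+2 < kk i := by omega
    have hyz' : D.tail (a i (2*t'+1)) = D.tail (a i (2*t'+2)) := Ht t' h2t
    have hyzne' : a i (2*t'+1) ≠ a i (2*t'+2) := fun h => by
      have := hinj _ _ (by omega) (by omega) h; omega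
    have htv' : D.IsTreeNode (D.tail (a i (2*t'+1))) :=
      aux_tree D hph (aux_two_le_outdeg D rfl hyz'.symm hyzne')
    have hnr' : ¬ D.IsRetic (D.tail (a i (2*t'+1))) := fun h => by
      have := htv'.1; have := h.1; omega
    have hm1 : D.bulgeMult (a i (2*t'+1)) = 1 := aux_mult_one D hnr'
    have hm2 : D.bulgeMult (a i (2*t'+2)) = 1 :=
      aux_mult_one D (by rw [← hyz']; exact hnr')
    obtain ⟨ey', hey'⟩ : ∃ w : D.BArc, w.1 = a i (2*t'+1) :=
      ⟨⟨a i (2*t'+1), ⟨0, by rw [hm1]; omega⟩⟩, rfl⟩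
    obtain ⟨ez', hez'⟩ : ∃ w : D.BArc, w.1 = a i (2*t'+2) :=
      ⟨⟨a i (2*t'+2), ⟨0, by rw [hm2]; omega⟩⟩, rfl⟩
    obtain ⟨e', he', hS'⟩ := IH t' (by omega) h2t ey' ez' hey' hez'
    have hmez : m = ez' := by
      apply aux_barc_eq D
      · rw [hmx, hez', harith]
      · rw [hmx, harith]; exact hm2
    have hnroot' : ¬ D.IsRootArc ez'.1 := by
      rw [hez']
      intro h
      have h0 := h.1
      rw [← hyz'] at h0
      have := htv'.1
      omega
    obtain ⟨s0, -, huq⟩ := hP2 ez' hnroot'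
    have hseq1 := huq s ⟨hsP, by rw [← hmez]; exact hms⟩
    have hseq2 := huq ({e', ey', ez'} : Finset D.BArc) ⟨hS', by simp⟩
    have hsS : s = ({e', ey', ez'} : Finset D.BArc) := hseq1.trans hseq2.symm
    rw [hsS] at hes
    have hretr : D.IsRetic (D.tail e.1) := by rw [he]; exact hrv
    rcases Finset.mem_insert.mp hes with hcase | hcase
    · -- e = e' : heads coincide, contradicting NoParallel
      rw [hcase] at he
      have hh0 : D.head (a i (2*t')) = D.head (a i (2*(t'+1))) := he'.symm.trans he
      have hA : D.head (a i (2*t')) = D.head (a i (2*t'+1)) := Hh t' (by omega)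
      have hh2 : D.head (a i (2*t'+1)) = D.head (a i (2*t'+2)) := by
        rw [← hA, hh0, harith]
      have heq := hnp _ _ hyz' hh2
      have := hinj _ _ (by omega) (by omega) heq
      omega
    rcases Finset.mem_insert.mp hcase with hcase | hcase
    · -- e = ey' : tree-node tail vs reticulation tail
      rw [hcase, hey'] at hretr
      have := htv'.1; have := hretr.1; omega
    · -- e = ez' : tree-node tail vs reticulation tail
      rw [Finset.mem_singleton.mp hcase, hez'] at hretr
      rw [← hyz'] at hretr
      have := htv'.1; have := hretr.1; omega
end

section
/- Let N be a semi-binary network with k reticulations of indegrees r_1, ..., r_k. Then the number of non-isomorphic cherry covers of the bulged version B(N) is at most r_1·r_2·⋯·r_k. Moreover, N is tree-child if and only if the number of cherry covers equals exactly r_1·r_2·⋯·r_k. -/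
open Classical

namespace MGraph

set_option linter.unusedSectionVars false
set_option maxHeartbeats 1000000

variable {V A : Type} [Fintype V] [Fintype A] [DecidableEq V] [DecidableEq A]

variable (D : MGraph V A)

lemma mult_pos (a : A) : 0 < D.bulgeMult a := by
  unfold bulgeMult
  split
  · next h => have := h.1; omega
  · exact Nat.one_pos

def cp (a : A) : D.BArc := ⟨a, ⟨0, D.mult_pos a⟩⟩

@[simp] lemma cp_fst (a : A) : (D.cp a).1 = a := rfl

lemma mult_one {a : A} (h : ¬ D.IsRetic (D.tail a)) : D.bulgeMult a = 1 := if_neg h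

lemma mult_retic {a : A} (h : D.IsRetic (D.tail a)) :
    D.bulgeMult a = D.indeg (D.tail a) - 1 := if_pos h

lemma copy_eq {e e' : D.BArc} (h1 : e.1 = e'.1) (h : ¬ D.IsRetic (D.tail e.1)) : e = e' := by
  obtain ⟨a, j⟩ := e; obtain ⟨a', j'⟩ := e'
  cases h1
  have hm := D.mult_one (a := a) h
  have hj : (j : ℕ) < 1 := hm ▸ j.2
  have hj' : (j' : ℕ) < 1 := hm ▸ j'.2
  congr 1
  exact Fin.ext (by omega)

lemma out_unique {v : V} (h : D.outdeg v = 1) {a b : A}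
    (ha : D.tail a = v) (hb : D.tail b = v) : a = b := by
  have := Fintype.card_le_one_iff.mp (le_of_eq h) ⟨a, ha⟩ ⟨b, hb⟩
  exact congrArg Subtype.val this

lemma exists_out {v : V} (h : 0 < D.outdeg v) : ∃ a, D.tail a = v := by
  obtain ⟨⟨a, ha⟩⟩ := Fintype.card_pos_iff.mp h
  exact ⟨a, ha⟩

lemma exists_in {v : V} (h : 0 < D.indeg v) : ∃ a, D.head a = v := by
  obtain ⟨⟨a, ha⟩⟩ := Fintype.card_pos_iff.mp h
  exact ⟨a, ha⟩

lemma outdeg_pos_of_arc (a : A) : 0 < D.outdeg (D.tail a) :=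
  Fintype.card_pos_iff.mpr ⟨⟨a, rfl⟩⟩

lemma indeg_pos_of_arc (a : A) : 0 < D.indeg (D.head a) :=
  Fintype.card_pos_iff.mpr ⟨⟨a, rfl⟩⟩

lemma tree_ne_retic {v : V} (h : D.IsTreeNode v) (h' : D.IsRetic v) : False := by
  have := h.1; have := h'.1; omega

lemma heads_ne (hnp : D.NoParallel) {a b : A} (hne : a ≠ b) (ht : D.tail a = D.tail b) :
    D.head a ≠ D.head b := fun h => hne (hnp a b ht h)

lemma no_self (hac : D.Acyclic) (a : A) : D.tail a ≠ D.head a := by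
  obtain ⟨rk, hrk⟩ := hac
  intro h
  have := hrk a
  rw [h] at this
  exact lt_irrefl _ this

lemma tail_cases (hsb : D.IsSemiBinary) (a : A) :
    D.IsRoot (D.tail a) ∨ D.IsTreeNode (D.tail a) ∨ D.IsRetic (D.tail a) := by
  rcases hsb.1.2.2.2 (D.tail a) with h | h | h | h
  · exact Or.inl h
  · exact absurd (D.outdeg_pos_of_arc a) (by rw [h.2]; omega)
  · exact Or.inr (Or.inl h)
  · exact Or.inr (Or.inr h)

lemma two_out (hsb : D.IsSemiBinary) {t : V} (ht : D.IsTreeNode t) :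
    ∃ a b : A, a ≠ b ∧ D.tail a = t ∧ D.tail b = t ∧ ∀ c, D.tail c = t → c = a ∨ c = b := by
  have h2 : Fintype.card {a : A // D.tail a = t} = 2 := hsb.2 t ht
  rw [← Finset.card_univ, Finset.card_eq_two] at h2
  obtain ⟨⟨x, hx⟩, ⟨y, hy⟩, hxy, hu⟩ := h2
  refine ⟨x, y, fun h => hxy (by cases h; rfl), hx, hy, fun c hc => ?_⟩
  have : (⟨c, hc⟩ : {a : A // D.tail a = t}) ∈ Finset.univ := Finset.mem_univ _
  rw [hu] at this
  simp only [Finset.mem_insert, Finset.mem_singleton] at this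
  rcases this with h | h
  · exact Or.inl (congrArg Subtype.val h)
  · exact Or.inr (congrArg Subtype.val h)

lemma arcs_two (hsb : D.IsSemiBinary) {t : V} (ht : D.IsTreeNode t) {a b : A}
    (hab : a ≠ b) (ha : D.tail a = t) (hb : D.tail b = t) :
    ∀ c, D.tail c = t → c = a ∨ c = b := by
  obtain ⟨x, y, hxy, hx, hy, hall⟩ := D.two_out hsb ht
  intro c hc
  rcases hall a ha with rfl | rfl <;> rcases hall b hb with rfl | rfl <;>
    first
      | exact absurd rfl hab
      | (rcases hall c hc with rfl | rfl <;> simp)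

@[simp] lemma bulged_tail (e : D.BArc) : D.Bulged.tail e = D.tail e.1 := rfl
@[simp] lemma bulged_head (e : D.BArc) : D.Bulged.head e = D.head e.1 := rfl

noncomputable def tnF : Finset V := (Set.toFinite {v : V | D.IsTreeNode v}).toFinset

@[simp] lemma mem_tnF {t : V} : t ∈ D.tnF ↔ D.IsTreeNode t := Set.Finite.mem_toFinset _

noncomputable def inF (u : V) : Finset A := (Set.toFinite {a : A | D.head a = u}).toFinset

@[simp] lemma mem_inF {u : V} {a : A} : a ∈ D.inF u ↔ D.head a = u := Set.Finite.mem_toFinset _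

lemma card_inF (u : V) : (D.inF u).card = D.indeg u := by
  rw [inF, Set.Finite.card_toFinset]
  simp [indeg, Nat.card_coe_set_eq]
  exact (Fintype.card_subtype _).symm

def MidC (f : {v : V // D.IsRetic v} → A) (a : A) : Prop :=
  ∃ h : D.IsRetic (D.head a), a ≠ f ⟨D.head a, h⟩

def ValidChoice (f : {v : V // D.IsRetic v} → A) : Prop :=
  (∀ u, D.head (f u) = u.1) ∧
  (∀ (a : A) (h : D.IsRetic (D.head a)), ¬ D.IsTreeNode (D.tail a) → a = f ⟨D.head a, h⟩) ∧
  (∀ a b : A, D.tail a = D.tail b → D.MidC f a → D.MidC f b → a = b)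

noncomputable def imgShape (f : {v : V // D.IsRetic v} → A) (t : V) : Finset A :=
  (Set.toFinite {c : A | D.tail c = t ∨
    ∃ a, D.tail a = t ∧ D.MidC f a ∧ D.tail c = D.head a}).toFinset

@[simp] lemma mem_imgShape {f : {v : V // D.IsRetic v} → A} {t : V} {c : A} :
    c ∈ D.imgShape f t ↔ D.tail c = t ∨
      ∃ a, D.tail a = t ∧ D.MidC f a ∧ D.tail c = D.head a := Set.Finite.mem_toFinset _

noncomputable def classOf (f : {v : V // D.IsRetic v} → A) : Multiset (Finset A) :=
  (D.tnF).val.map (D.imgShape f)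

lemma mem_classOf {f : {v : V // D.IsRetic v} → A} {m : Multiset (Finset A)} :
    True := trivial

noncomputable def MidsU (P : Finset (Finset D.BArc)) (u : {v : V // D.IsRetic v}) : Finset A :=
  (Set.toFinite {a : A | D.head a = u.1 ∧ D.IsTreeNode (D.tail a) ∧
    ∃ s ∈ P, (∃ e ∈ s, e.1 = a) ∧ ∃ e' ∈ s, D.tail e'.1 = u.1}).toFinset

@[simp] lemma mem_MidsU {P : Finset (Finset D.BArc)} {u : {v : V // D.IsRetic v}} {a : A} :
    a ∈ D.MidsU P u ↔ D.head a = u.1 ∧ D.IsTreeNode (D.tail a) ∧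
      ∃ s ∈ P, (∃ e ∈ s, e.1 = a) ∧ ∃ e' ∈ s, D.tail e'.1 = u.1 := Set.Finite.mem_toFinset _

/-- structure of a shape in a bulged cherry cover -/
lemma cover_shape (hsb : D.IsSemiBinary) {P : Finset (Finset D.BArc)}
    (hP : D.IsBulgedCherryCover P) {s : Finset D.BArc} (hs : s ∈ P) :
    ∃ x y : D.BArc, x ∈ s ∧ y ∈ s ∧ x.1 ≠ y.1 ∧ D.tail x.1 = D.tail y.1 ∧
      D.IsTreeNode (D.tail x.1) ∧
      (s = {x, y} ∨ ∃ c : D.BArc, c ∈ s ∧ D.IsRetic (D.tail c.1) ∧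
        D.head x.1 = D.tail c.1 ∧ D.head y.1 ≠ D.tail c.1 ∧ s = {c, x, y}) := by
  rcases hP.1 s hs with ⟨x, y, hxy, hseq, htl, hhd⟩ | ⟨mid, bot, top, hbm, hbt, hmt, hseq, h1, h2, hrt, htn⟩
  · -- cherry shape
    simp only [bulged_tail, bulged_head] at htl hhd
    have hne : x.1 ≠ y.1 := fun h => hhd (by rw [h])
    have hxm : x ∈ s := by rw [hseq]; simp
    have hym : y ∈ s := by rw [hseq]; simp
    refine ⟨x, y, hxm, hym, hne, htl, ?_, Or.inl hseq⟩
    rcases D.tail_cases hsb x.1 with h | h | h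
    · exact absurd h (hP.2.2 s hs x hxm)
    · exact h
    · exact absurd (D.out_unique h.2 rfl htl.symm) hne
  · -- reticulated cherry shape
    simp only [bulged_tail, bulged_head] at h1 h2 hrt htn
    have hmtne : mid.1 ≠ top.1 := by
      intro h
      exact hmt (D.copy_eq h (fun hr => D.tree_ne_retic htn hr))
    have hmm : mid ∈ s := by rw [hseq]; simp
    have htm : top ∈ s := by rw [hseq]; simp
    have hbm' : bot ∈ s := by rw [hseq]; simp
    refine ⟨mid, top, hmm, htm, hmtne, h2, htn, Or.inr ⟨bot, hbm', hrt, h1, ?_, ?_⟩⟩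
    · intro h
      have : D.head top.1 = D.head mid.1 := by rw [h, h1]
      have := hsb.1.2.1 top.1 mid.1 h2.symm this
      exact hmtne this.symm
    · exact hseq

lemma nonroot_of_tree {e : D.BArc} (h : D.IsTreeNode (D.tail e.1)) : ¬ D.IsRootArc e.1 := by
  intro hr
  have := h.1; have := hr.1; omega

lemma nonroot_of_retic {e : D.BArc} (h : D.IsRetic (D.tail e.1)) : ¬ D.IsRootArc e.1 := by
  intro hr
  have := h.1; have := hr.1; omega

lemma shape_uniq {P : Finset (Finset D.BArc)} (hP : D.IsBulgedCherryCover P)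
    {e : D.BArc} (h : ¬ D.IsRootArc e.1) {s s' : Finset D.BArc}
    (hs : s ∈ P) (he : e ∈ s) (hs' : s' ∈ P) (he' : e ∈ s') : s = s' :=
  ((hP.2.1 e h).unique ⟨hs, he⟩ ⟨hs', he'⟩)

/-- uniqueness of the reticulation-tailed element in a shape -/
lemma shape_retic_unique (hsb : D.IsSemiBinary) {P : Finset (Finset D.BArc)}
    (hP : D.IsBulgedCherryCover P) {s : Finset D.BArc} (hs : s ∈ P)
    {c c' : D.BArc} (hc : c ∈ s) (hc' : c' ∈ s)
    (h1 : D.IsRetic (D.tail c.1)) (h2 : D.IsRetic (D.tail c'.1)) : c = c' := by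
  obtain ⟨x, y, hx, hy, hne, hts, htn, hcase⟩ := D.cover_shape hsb hP hs
  have hty : D.IsTreeNode (D.tail y.1) := hts ▸ htn
  rcases hcase with hseq | ⟨c₀, hc₀, hr₀, hhx, hhy, hseq⟩
  · rw [hseq] at hc hc'
    simp only [Finset.mem_insert, Finset.mem_singleton] at hc hc'
    rcases hc with rfl | rfl
    · exact absurd h1 (fun h => D.tree_ne_retic htn h)
    · exact absurd h1 (fun h => D.tree_ne_retic hty h)
  · rw [hseq] at hc hc'
    simp only [Finset.mem_insert, Finset.mem_singleton] at hc hc'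
    have hcc : c = c₀ := by
      rcases hc with rfl | rfl | rfl
      · rfl
      · exact absurd h1 (fun h => D.tree_ne_retic htn h)
      · exact absurd h1 (fun h => D.tree_ne_retic hty h)
    have hcc' : c' = c₀ := by
      rcases hc' with rfl | rfl | rfl
      · rfl
      · exact absurd h2 (fun h => D.tree_ne_retic htn h)
      · exact absurd h2 (fun h => D.tree_ne_retic hty h)
    rw [hcc, hcc']

/-- the structure of a shape containing a reticulation-tailed element -/
lemma shape_struct (hsb : D.IsSemiBinary) {P : Finset (Finset D.BArc)}
    (hP : D.IsBulgedCherryCover P) {s : Finset D.BArc} (hs : s ∈ P)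
    {c : D.BArc} (hc : c ∈ s) (hrc : D.IsRetic (D.tail c.1)) :
    ∃ x y : D.BArc, s = {c, x, y} ∧ D.IsTreeNode (D.tail x.1) ∧ D.tail y.1 = D.tail x.1 ∧
      D.head x.1 = D.tail c.1 ∧ D.head y.1 ≠ D.tail c.1 ∧ x.1 ≠ y.1 := by
  obtain ⟨x, y, hx, hy, hne, hts, htn, hcase⟩ := D.cover_shape hsb hP hs
  have hty : D.IsTreeNode (D.tail y.1) := hts ▸ htn
  rcases hcase with hseq | ⟨c₀, hc₀, hr₀, hhx, hhy, hseq⟩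
  · rw [hseq] at hc
    simp only [Finset.mem_insert, Finset.mem_singleton] at hc
    rcases hc with rfl | rfl
    · exact absurd hrc (fun h => D.tree_ne_retic htn h)
    · exact absurd hrc (fun h => D.tree_ne_retic hty h)
  · have hcc : c = c₀ := by
      rw [hseq] at hc
      simp only [Finset.mem_insert, Finset.mem_singleton] at hc
      rcases hc with rfl | rfl | rfl
      · rfl
      · exact absurd hrc (fun h => D.tree_ne_retic htn h)
      · exact absurd hrc (fun h => D.tree_ne_retic hty h)
    subst hcc
    exact ⟨x, y, hseq, htn, hts.symm, hhx, hhy, hne⟩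

/-- every shape contains the sibling copy -/
lemma shape_sibling (hsb : D.IsSemiBinary) {P : Finset (Finset D.BArc)}
    (hP : D.IsBulgedCherryCover P) {s : Finset D.BArc} (hs : s ∈ P)
    {e : D.BArc} (he : e ∈ s) (hte : D.IsTreeNode (D.tail e.1)) :
    ∃ e' : D.BArc, e' ∈ s ∧ e'.1 ≠ e.1 ∧ D.tail e'.1 = D.tail e.1 := by
  obtain ⟨x, y, hx, hy, hne, hts, htn, hcase⟩ := D.cover_shape hsb hP hs
  have hmem : e = x ∨ e = y := by
    rcases hcase with hseq | ⟨c₀, hc₀, hr₀, hhx, hhy, hseq⟩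
    · rw [hseq] at he
      simpa using he
    · rw [hseq] at he
      simp only [Finset.mem_insert, Finset.mem_singleton] at he
      rcases he with rfl | h | h
      · exact absurd hr₀ (fun h => D.tree_ne_retic hte h)
      · exact Or.inl h
      · exact Or.inr h
  rcases hmem with rfl | rfl
  · exact ⟨y, hy, fun h => hne h.symm, hts.symm⟩
  · exact ⟨x, hx, hne, hts⟩

theorem exists_choice (hsb : D.IsSemiBinary) {P : Finset (Finset D.BArc)}
    (hP : D.IsBulgedCherryCover P) :
    ∃ f : {v : V // D.IsRetic v} → A, D.ValidChoice f ∧ D.coverClass P = D.classOf f := by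
  classical
  have houe : ∀ u : {v : V // D.IsRetic v}, ∃ w, D.tail w = u.1 := fun u =>
    D.exists_out (by rw [u.2.2]; omega)
  choose ou hou using houe
  have houR : ∀ u, D.IsRetic (D.tail (ou u)) := fun u => by rw [hou u]; exact u.2
  -- counting mids at each reticulation
  have hcardMids : ∀ u, (D.MidsU P u).card = D.indeg u.1 - 1 := by
    intro u
    have hmult : D.bulgeMult (ou u) = D.indeg u.1 - 1 := by
      rw [D.mult_retic (houR u), hou u]
    have hkey : ∀ j : Fin (D.bulgeMult (ou u)), ∃ m : A,
        D.head m = u.1 ∧ D.IsTreeNode (D.tail m) ∧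
        ∃ s ∈ P, (⟨ou u, j⟩ : D.BArc) ∈ s ∧ D.cp m ∈ s := by
      intro j
      have hnr : ¬ D.IsRootArc ((⟨ou u, j⟩ : D.BArc)).1 := D.nonroot_of_retic (houR u)
      obtain ⟨s, ⟨hs, hcs⟩, -⟩ := hP.2.1 _ hnr
      obtain ⟨x, y, hseq, htnx, htxy, hhx, hhy, hxyne⟩ := D.shape_struct hsb hP hs hcs (houR u)
      have hcpx : D.cp x.1 = x := D.copy_eq rfl (fun h => D.tree_ne_retic htnx h)
      refine ⟨x.1, hhx.trans (hou u), htnx, s, hs, hcs, ?_⟩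
      rw [hcpx, hseq]; simp
    choose mf hm1 hm2 hm3 using hkey
    rw [← hmult, ← Fintype.card_fin (D.bulgeMult (ou u)), ← Finset.card_univ]
    refine (Finset.card_bij (fun j _ => mf j) ?_ ?_ ?_).symm
    · intro j _
      obtain ⟨s, hs, hc, hcp⟩ := hm3 j
      exact D.mem_MidsU.mpr ⟨hm1 j, hm2 j, s, hs, ⟨D.cp (mf j), hcp, rfl⟩,
        ⟨⟨ou u, j⟩, hc, hou u⟩⟩
    · intro j _ j' _ heq
      obtain ⟨s, hs, hc, hcp⟩ := hm3 j
      obtain ⟨s', hs', hc', hcp'⟩ := hm3 j'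
      have heq' : mf j = mf j' := heq
      have hcp'' : D.cp (mf j) ∈ s' := by rw [heq']; exact hcp'
      have hss : s = s' := D.shape_uniq hP (D.nonroot_of_tree (hm2 j)) hs hcp hs' hcp''
      rw [← hss] at hc'
      have := D.shape_retic_unique hsb hP hs hc hc' (houR u) (houR u)
      injection this with h1 h2
    · intro b hb
      rw [D.mem_MidsU] at hb
      obtain ⟨hh, htb, s, hs, ⟨e, he, he1⟩, ⟨e', he', he'1⟩⟩ := hb
      obtain ⟨w, j⟩ := e'
      have hw : w = ou u := D.out_unique u.2.2 he'1 (hou u)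
      subst hw
      refine ⟨j, Finset.mem_univ j, ?_⟩
      obtain ⟨s₀, hs₀, hc₀, hcp₀⟩ := hm3 j
      have hss : s₀ = s := D.shape_uniq hP (D.nonroot_of_retic (houR u)) hs₀ hc₀ hs he'
      rw [hss] at hcp₀
      obtain ⟨x, y, hseq, htnx, htxy, hhx, hhy, hxyne⟩ := D.shape_struct hsb hP hs he' (houR u)
      have heb : e = D.cp b := (D.copy_eq (e := D.cp b) (e' := e) he1.symm
        (fun h => D.tree_ne_retic htb h)).symm
      have hub : D.head b = D.tail (ou u) := by rw [hh, hou u]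
      have hxb : ∀ z : D.BArc, z ∈ s → D.head z.1 = D.tail (ou u) →
          D.IsTreeNode (D.tail z.1) → z = x := by
        intro z hz hzh hzt
        rw [hseq] at hz
        simp only [Finset.mem_insert, Finset.mem_singleton] at hz
        rcases hz with rfl | rfl | rfl
        · exact absurd (houR u) (fun h => D.tree_ne_retic hzt h)
        · rfl
        · exact absurd hzh hhy
      have h1 : D.cp b = x := hxb (D.cp b) (by rw [← heb]; exact he)
        (by simpa using hub) (by simpa using htb)
      have h2 : D.cp (mf j) = x := hxb (D.cp (mf j)) hcp₀
        (by simpa using (hm1 j).trans (hou u).symm) (by simpa using hm2 j)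
      have := h1.trans h2.symm
      simpa using (congrArg Sigma.fst this).symm
  -- the omitted in-arc
  have hsubM : ∀ u, D.MidsU P u ⊆ D.inF u.1 := fun u a ha =>
    D.mem_inF.mpr (D.mem_MidsU.mp ha).1
  have hone : ∀ u, ∃ b, D.inF u.1 \ D.MidsU P u = {b} := by
    intro u
    rw [← Finset.card_eq_one, Finset.card_sdiff_of_subset (hsubM u), D.card_inF, hcardMids]
    have := u.2.1; omega
  choose f hfs using hone
  have hfmem : ∀ u, f u ∈ D.inF u.1 \ D.MidsU P u := fun u => by
    rw [hfs u]; exact Finset.mem_singleton_self _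
  have hfhead : ∀ u, D.head (f u) = u.1 := fun u =>
    D.mem_inF.mp (Finset.mem_sdiff.mp (hfmem u)).1
  have hfnot : ∀ u, f u ∉ D.MidsU P u := fun u => (Finset.mem_sdiff.mp (hfmem u)).2
  have hfuniq : ∀ u a, D.head a = u.1 → a ∉ D.MidsU P u → a = f u := by
    intro u a hh hnm
    have : a ∈ D.inF u.1 \ D.MidsU P u := Finset.mem_sdiff.mpr ⟨D.mem_inF.mpr hh, hnm⟩
    rw [hfs u] at this; simpa using this
  have hmem_of_ne : ∀ u a, D.head a = u.1 → a ≠ f u → a ∈ D.MidsU P u := by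
    intro u a hh hne; by_contra h; exact hne (hfuniq u a hh h)
  -- validity
  have hval : D.ValidChoice f := by
    refine ⟨hfhead, ?_, ?_⟩
    · intro a h hnt
      by_contra hne
      exact hnt (D.mem_MidsU.mp (hmem_of_ne ⟨D.head a, h⟩ a rfl hne)).2.1
    · intro a b htab hma hmb
      by_contra hab
      obtain ⟨hra, hnea⟩ := hma
      obtain ⟨hrb, hneb⟩ := hmb
      have hia := D.mem_MidsU.mp (hmem_of_ne ⟨D.head a, hra⟩ a rfl hnea)
      have hib := D.mem_MidsU.mp (hmem_of_ne ⟨D.head b, hrb⟩ b rfl hneb)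
      obtain ⟨-, hta, s, hs, ⟨e, he, he1⟩, ⟨e2, he2, he2t⟩⟩ := hia
      obtain ⟨-, htb, s', hs', ⟨e', he', he'1⟩, ⟨e3, he3, he3t⟩⟩ := hib
      have hea : e = D.cp a := (D.copy_eq (e := D.cp a) (e' := e) he1.symm
        (fun h => D.tree_ne_retic hta h)).symm
      have heb : e' = D.cp b := (D.copy_eq (e := D.cp b) (e' := e') he'1.symm
        (fun h => D.tree_ne_retic htb h)).symm
      obtain ⟨y, hy, hyne, hyt⟩ := D.shape_sibling hsb hP hs (e := D.cp a) (hea ▸ he)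
        (by simpa using hta)
      have hyb : y.1 = b := by
        rcases D.arcs_two hsb hta hab rfl htab.symm y.1 (by simpa using hyt) with h | h
        · exact absurd h (by simpa using hyne)
        · exact h
      have htbt : D.IsTreeNode (D.tail b) := htab ▸ hta
      have hycp : y = D.cp b := D.copy_eq (by simpa using hyb)
        (by rw [hyb]; exact fun h => D.tree_ne_retic htbt h)
      have hss : s = s' := D.shape_uniq hP
        (D.nonroot_of_tree (e := D.cp b) (by simpa using htbt))
        hs (hycp ▸ hy) hs' (heb ▸ he')
      rw [← hss] at he3
      have hr2 : D.IsRetic (D.tail e2.1) := by rw [he2t]; exact hra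
      have hr3 : D.IsRetic (D.tail e3.1) := by rw [he3t]; exact hrb
      have := D.shape_retic_unique hsb hP hs he2 he3 hr2 hr3
      have hhab : D.head a = D.head b := by
        rw [← show D.tail e2.1 = D.head a from he2t, ← show D.tail e3.1 = D.head b from he3t,
          this]
      exact D.heads_ne hsb.1.2.1 hab htab hhab
  -- the shape image identification
  have hA4 : ∀ s ∈ P, ∀ x : D.BArc, x ∈ s → D.IsTreeNode (D.tail x.1) →
      s.image (fun e : D.BArc => e.1) = D.imgShape f (D.tail x.1) := by
    intro s hs x hx htx
    obtain ⟨x₀, y₀, hx₀, hy₀, hne, hts, htn, hcase⟩ := D.cover_shape hsb hP hs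
    have hty : D.IsTreeNode (D.tail y₀.1) := hts ▸ htn
    have hall := D.arcs_two hsb htn hne rfl hts.symm
    have htx' : D.tail x.1 = D.tail x₀.1 := by
      rcases hcase with hseq | ⟨c₀, hc₀, hr₀, hhx, hhy, hseq⟩
      · rw [hseq] at hx
        simp only [Finset.mem_insert, Finset.mem_singleton] at hx
        rcases hx with rfl | rfl
        · rfl
        · exact hts.symm
      · rw [hseq] at hx
        simp only [Finset.mem_insert, Finset.mem_singleton] at hx
        rcases hx with rfl | rfl | rfl
        · exact absurd hr₀ (fun h => D.tree_ne_retic htx h)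
        · rfl
        · exact hts.symm
    rw [htx']
    rcases hcase with hseq | ⟨c₀, hc₀, hr₀, hhx, hhy, hseq⟩
    · -- cherry case
      have hnm : ∀ c, D.tail c = D.tail x₀.1 → ¬ D.MidC f c := by
        rintro c hct ⟨hrc, hnec⟩
        have hic := D.mem_MidsU.mp (hmem_of_ne ⟨D.head c, hrc⟩ c rfl hnec)
        obtain ⟨-, htc, s', hs', ⟨e, he, he1⟩, ⟨e2, he2, he2t⟩⟩ := hic
        have hec : e = D.cp c := (D.copy_eq (e := D.cp c) (e' := e) he1.symm
          (fun h => D.tree_ne_retic htc h)).symm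
        have hcs : D.cp c ∈ s := by
          rcases hall c hct with h | h
          · have hcx : D.cp c = x₀ := D.copy_eq (by simpa using h)
              (fun hh => D.tree_ne_retic htc hh)
            rw [hcx]; exact hx₀
          · have hcy : D.cp c = y₀ := D.copy_eq (by simpa using h)
              (fun hh => D.tree_ne_retic htc hh)
            rw [hcy]; exact hy₀
        have hss : s' = s := D.shape_uniq hP
          (D.nonroot_of_tree (e := D.cp c) (by simpa using htc)) hs' (hec ▸ he)
          hs hcs
        rw [hss, hseq] at he2
        simp only [Finset.mem_insert, Finset.mem_singleton] at he2
        have hr2 : D.IsRetic (D.tail e2.1) := by rw [he2t]; exact hrc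
        rcases he2 with rfl | rfl
        · exact D.tree_ne_retic htn hr2
        · exact D.tree_ne_retic hty hr2
      ext c
      rw [hseq]
      simp only [Finset.image_insert, Finset.image_singleton, Finset.mem_insert,
        Finset.mem_singleton, D.mem_imgShape]
      constructor
      · rintro (rfl | rfl)
        · exact Or.inl rfl
        · exact Or.inl hts.symm
      · rintro (hc | ⟨a', hta', hma', -⟩)
        · exact hall c hc
        · exact absurd hma' (hnm a' hta')
    · -- reticulated cherry case
      have hMa : D.MidC f x₀.1 := by
        have hh : D.IsRetic (D.head x₀.1) := by rw [hhx]; exact hr₀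
        refine ⟨hh, fun hEq => ?_⟩
        have hmem : x₀.1 ∈ D.MidsU P ⟨D.head x₀.1, hh⟩ :=
          D.mem_MidsU.mpr ⟨rfl, htn, s, hs, ⟨x₀, hx₀, rfl⟩, ⟨c₀, hc₀, hhx.symm⟩⟩
        exact hfnot ⟨D.head x₀.1, hh⟩ (by rw [← hEq]; exact hmem)
      have hMb : ¬ D.MidC f y₀.1 := by
        rintro ⟨hh, hneb⟩
        have hib := D.mem_MidsU.mp (hmem_of_ne ⟨D.head y₀.1, hh⟩ y₀.1 rfl hneb)
        obtain ⟨-, htb, s', hs', ⟨e, he, he1⟩, ⟨e2, he2, he2t⟩⟩ := hib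
        have hey : e = y₀ := D.copy_eq he1 (by rw [he1]; exact fun h => D.tree_ne_retic hty h)
        have hss : s' = s := D.shape_uniq hP
          (D.nonroot_of_tree (e := e) (by rw [hey]; exact hty)) hs' he hs
          (by rw [hey]; exact hy₀)
        rw [hss, hseq] at he2
        simp only [Finset.mem_insert, Finset.mem_singleton] at he2
        have hr2 : D.IsRetic (D.tail e2.1) := by rw [he2t]; exact hh
        rcases he2 with rfl | rfl | rfl
        · exact hhy he2t.symm
        · exact D.tree_ne_retic htn hr2
        · exact D.tree_ne_retic hty hr2
      have houc : ∀ c, D.tail c = D.tail c₀.1 → c = c₀.1 :=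
        fun c hc => D.out_unique hr₀.2 hc rfl
      ext c
      rw [hseq]
      simp only [Finset.image_insert, Finset.image_singleton, Finset.mem_insert,
        Finset.mem_singleton, D.mem_imgShape]
      constructor
      · rintro (rfl | rfl | rfl)
        · exact Or.inr ⟨x₀.1, rfl, hMa, hhx.symm⟩
        · exact Or.inl rfl
        · exact Or.inl hts.symm
      · rintro (hc | ⟨a', hta', hma', hca'⟩)
        · rcases hall c hc with rfl | rfl
          · exact Or.inr (Or.inl rfl)
          · exact Or.inr (Or.inr rfl)
        · rcases hall a' hta' with rfl | rfl
          · exact Or.inl (houc c (by rw [hca', hhx]))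
          · exact absurd hma' hMb
  -- multiset equality
  refine ⟨f, hval, ?_⟩
  have hnodup1 : (D.coverClass P).Nodup := by
    refine Multiset.Nodup.map_on ?_ P.nodup
    intro s hsv s' hsv' heq
    rw [Finset.mem_val] at hsv hsv'
    obtain ⟨x₀, y₀, hx₀, hy₀, hne, hts, htn, -⟩ := D.cover_shape hsb hP hsv
    have h1 : x₀.1 ∈ s'.image (fun e : D.BArc => e.1) := by
      rw [← heq]; exact Finset.mem_image_of_mem _ hx₀
    obtain ⟨e', he', he'1⟩ := Finset.mem_image.mp h1
    have he'x : e' = x₀ := D.copy_eq he'1 (by rw [he'1]; exact fun h => D.tree_ne_retic htn h)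
    exact D.shape_uniq hP (D.nonroot_of_tree htn) hsv hx₀ hsv' (he'x ▸ he')
  have hnodup2 : (D.classOf f).Nodup := by
    refine Multiset.Nodup.map_on ?_ (D.tnF).nodup
    intro t htv t' htv' heq
    rw [Finset.mem_val, D.mem_tnF] at htv htv'
    obtain ⟨a, ha⟩ := D.exists_out (v := t) (by have := htv.2; omega)
    have h1 : a ∈ D.imgShape f t := D.mem_imgShape.mpr (Or.inl ha)
    rw [heq] at h1
    rcases D.mem_imgShape.mp h1 with h | ⟨a', -, ⟨hra', -⟩, hca⟩
    · rw [← ha, h]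
    · have : D.IsRetic (D.tail a) := by rw [hca]; exact hra'
      exact absurd this (fun h => D.tree_ne_retic (ha ▸ htv) h)
  rw [(Multiset.Nodup.ext hnodup1 hnodup2)]
  intro m
  show m ∈ P.val.map _ ↔ m ∈ (D.tnF).val.map _
  simp only [Multiset.mem_map, Finset.mem_val]
  constructor
  · rintro ⟨s, hs, rfl⟩
    obtain ⟨x₀, y₀, hx₀, hy₀, hne, hts, htn, -⟩ := D.cover_shape hsb hP hs
    exact ⟨D.tail x₀.1, D.mem_tnF.mpr htn, (hA4 s hs x₀ hx₀ htn).symm⟩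
  · rintro ⟨t, htv, rfl⟩
    have htT : D.IsTreeNode t := D.mem_tnF.mp htv
    obtain ⟨a, ha⟩ := D.exists_out (v := t) (by have := htT.2; omega)
    have htT' : D.IsTreeNode (D.tail (D.cp a).1) := by simpa [ha] using htT
    have hnr : ¬ D.IsRootArc (D.cp a).1 := D.nonroot_of_tree htT'
    obtain ⟨s, ⟨hs, hcs⟩, -⟩ := hP.2.1 _ hnr
    refine ⟨s, hs, ?_⟩
    rw [hA4 s hs (D.cp a) hcs htT']
    simp [ha]

theorem exists_cover (hsb : D.IsSemiBinary) {f : {v : V // D.IsRetic v} → A}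
    (hf : D.ValidChoice f) :
    ∃ P : Finset (Finset D.BArc), D.IsBulgedCherryCover P ∧ D.coverClass P = D.classOf f := by
  classical
  obtain ⟨hf1, hf2, hf3⟩ := hf
  have houe : ∀ u : {v : V // D.IsRetic v}, ∃ w, D.tail w = u.1 := fun u =>
    D.exists_out (by rw [u.2.2]; omega)
  choose ou hou using houe
  have houR : ∀ u, D.IsRetic (D.tail (ou u)) := fun u => by rw [hou u]; exact u.2
  let MF : {v : V // D.IsRetic v} → Finset A :=
    fun u => (Set.toFinite {a : A | D.head a = u.1 ∧ D.MidC f a}).toFinset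
  have hMFmem : ∀ u a, a ∈ MF u ↔ D.head a = u.1 ∧ D.MidC f a := fun u a =>
    Set.Finite.mem_toFinset _
  have hMFeq : ∀ u, MF u = (D.inF u.1).erase (f u) := by
    intro u; ext a
    rw [hMFmem, Finset.mem_erase, D.mem_inF]
    constructor
    · rintro ⟨hh, hr, hne⟩
      have hsub : (⟨D.head a, hr⟩ : {v : V // D.IsRetic v}) = u := Subtype.ext hh
      exact ⟨fun hEq => hne (hEq.trans (congrArg f hsub.symm)), hh⟩
    · rintro ⟨hne, hh⟩
      have hr : D.IsRetic (D.head a) := by rw [hh]; exact u.2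
      have hsub : (⟨D.head a, hr⟩ : {v : V // D.IsRetic v}) = u := Subtype.ext hh
      exact ⟨hh, hr, fun hEq => hne (hEq.trans (congrArg f hsub))⟩
  have hMFcard : ∀ u, (MF u).card = D.bulgeMult (ou u) := by
    intro u
    rw [hMFeq, Finset.card_erase_of_mem (D.mem_inF.mpr (hf1 u)), D.card_inF,
      D.mult_retic (houR u), hou u]
  let eU : ∀ u, {a // a ∈ MF u} ≃ Fin (D.bulgeMult (ou u)) :=
    fun u => Fintype.equivFinOfCardEq (by rw [Fintype.card_coe]; exact hMFcard u)
  let bc : ∀ (u : {v : V // D.IsRetic v}) (a : A), a ∈ MF u → D.BArc :=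
    fun u a ha => ⟨ou u, eU u ⟨a, ha⟩⟩
  have hbc_fst : ∀ u a ha, (bc u a ha).1 = ou u := fun _ _ _ => rfl
  have hbc_surj : ∀ (u : {v : V // D.IsRetic v}) (e : D.BArc), e.1 = ou u →
      ∃ (a : A) (ha : a ∈ MF u), e = bc u a ha := by
    intro u e he
    obtain ⟨w, j⟩ := e
    dsimp only at he
    subst he
    refine ⟨((eU u).symm j).1, ((eU u).symm j).2, ?_⟩
    exact congrArg (fun k => (⟨ou u, k⟩ : D.BArc)) ((eU u).apply_symm_apply j).symm
  have hbc_inj : ∀ u a ha u' a' ha', bc u a ha = bc u' a' ha' → a = a' := by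
    intro u a ha u' a' ha' h
    have h1 : ou u = ou u' := congrArg Sigma.fst h
    have huu : u = u' := Subtype.ext (by rw [← hou u, ← hou u', h1])
    subst huu
    have h2 : eU u ⟨a, ha⟩ = eU u ⟨a', ha'⟩ := by
      injection h with hh1 hh2
    have := (eU u).injective h2
    exact congrArg Subtype.val this
  let St : V → Finset D.BArc := fun t =>
    (Set.toFinite {e : D.BArc | D.tail e.1 = t ∨
      ∃ (u : {v : V // D.IsRetic v}) (a : A) (ha : a ∈ MF u),
        D.tail a = t ∧ e = bc u a ha}).toFinset
  have hStmem : ∀ t e, e ∈ St t ↔ (D.tail e.1 = t ∨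
      ∃ (u : {v : V // D.IsRetic v}) (a : A) (ha : a ∈ MF u), D.tail a = t ∧ e = bc u a ha) :=
    fun t e => Set.Finite.mem_toFinset _
  have htree_of_mid : ∀ a : A, D.MidC f a → D.IsTreeNode (D.tail a) := by
    rintro a ⟨hr, hne⟩
    by_contra h
    exact hne (hf2 a hr h)
  have hshape : ∀ t, D.IsTreeNode t → ∃ a b : A, a ≠ b ∧ D.tail a = t ∧ D.tail b = t ∧
      ((¬ ∃ c, D.tail c = t ∧ D.MidC f c) ∧ St t = {D.cp a, D.cp b} ∨
       ∃ (u : {v : V // D.IsRetic v}) (ha : a ∈ MF u), D.MidC f a ∧ D.head a = u.1 ∧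
         ¬ D.MidC f b ∧ St t = {bc u a ha, D.cp a, D.cp b}) := by
    intro t htT
    obtain ⟨a₀, b₀, hab₀, ha₀, hb₀, hall₀⟩ := D.two_out hsb htT
    have hcp_of : ∀ e : D.BArc, D.tail e.1 = t → e = D.cp e.1 :=
      fun e he => D.copy_eq rfl (by rw [he]; exact fun h => D.tree_ne_retic htT h)
    by_cases hm : ∃ c, D.tail c = t ∧ D.MidC f c
    · obtain ⟨c, hct, hmc⟩ := hm
      obtain ⟨hr, hnec⟩ := hmc
      have hac : c ∈ MF ⟨D.head c, hr⟩ := (hMFmem _ _).mpr ⟨rfl, hr, hnec⟩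
      obtain ⟨b, hbt, hbc⟩ : ∃ b, D.tail b = t ∧ b ≠ c := by
        rcases hall₀ c hct with rfl | rfl
        · exact ⟨b₀, hb₀, fun h => hab₀ h.symm⟩
        · exact ⟨a₀, ha₀, hab₀⟩
      refine ⟨c, b, fun h => hbc h.symm, hct, hbt, Or.inr ⟨⟨D.head c, hr⟩, hac, ⟨hr, hnec⟩, rfl,
        ?_, ?_⟩⟩
      · intro hmb
        exact hbc (hf3 b c (hbt.trans hct.symm) hmb ⟨hr, hnec⟩)
      · ext e
        rw [hStmem]
        simp only [Finset.mem_insert, Finset.mem_singleton]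
        constructor
        · rintro (he | ⟨u', a', ha', hta', rfl⟩)
          · have he' := hcp_of e he
            rcases D.arcs_two hsb htT (fun h => hbc h.symm) hct hbt e.1 he with h | h
            · exact Or.inr (Or.inl (by rw [he', h]))
            · exact Or.inr (Or.inr (by rw [he', h]))
          · have hma' : D.MidC f a' := ((hMFmem _ _).mp ha').2
            have hac' : a' = c := hf3 a' c (hta'.trans hct.symm) hma' ⟨hr, hnec⟩
            subst hac'
            have huu : u' = ⟨D.head a', hr⟩ := Subtype.ext ((hMFmem _ _).mp ha').1.symm
            subst huu
            exact Or.inl rfl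
        · rintro (rfl | rfl | rfl)
          · exact Or.inr ⟨⟨D.head c, hr⟩, c, hac, hct, rfl⟩
          · exact Or.inl (by simpa using hct)
          · exact Or.inl (by simpa using hbt)
    · refine ⟨a₀, b₀, hab₀, ha₀, hb₀, Or.inl ⟨hm, ?_⟩⟩
      ext e
      rw [hStmem]
      simp only [Finset.mem_insert, Finset.mem_singleton]
      constructor
      · rintro (he | ⟨u', a', ha', hta', rfl⟩)
        · have he' := hcp_of e he
          rcases hall₀ e.1 he with h | h
          · exact Or.inl (by rw [he', h])
          · exact Or.inr (by rw [he', h])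
        · exact absurd ⟨a', hta', ((hMFmem _ _).mp ha').2⟩ hm
      · rintro (rfl | rfl)
        · exact Or.inl (by simpa using ha₀)
        · exact Or.inl (by simpa using hb₀)
  let P : Finset (Finset D.BArc) := Finset.image St D.tnF
  have hPmem : ∀ s, s ∈ P ↔ ∃ t, D.IsTreeNode t ∧ St t = s := by
    intro s
    simp only [P, Finset.mem_image, D.mem_tnF]
  have hnoroot : ∀ s ∈ P, ∀ e ∈ s, ¬ D.IsRootArc e.1 := by
    intro s hs e he
    obtain ⟨t, htT, rfl⟩ := (hPmem s).mp hs
    rcases (hStmem t e).mp he with h | ⟨u', a', ha', hta', rfl⟩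
    · exact D.nonroot_of_tree (by rw [h]; exact htT)
    · exact D.nonroot_of_retic (houR u')
  have hshapes : ∀ s ∈ P, D.Bulged.IsCherryShape s ∨
      D.Bulged.IsRCShape (fun v => D.IsTreeNode v) (fun v => D.IsRetic v) s := by
    intro s hs
    obtain ⟨t, htT, rfl⟩ := (hPmem s).mp hs
    obtain ⟨a, b, hab, hta, htb, hcase | ⟨u, ha, hma, hua, hmb, hseq⟩⟩ := hshape t htT
    · refine Or.inl ⟨D.cp a, D.cp b, fun h => hab (congrArg Sigma.fst h), hcase.2, ?_, ?_⟩
      · show D.tail a = D.tail b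
        rw [hta, htb]
      · show D.head a ≠ D.head b
        exact D.heads_ne hsb.1.2.1 hab (hta.trans htb.symm)
    · refine Or.inr ⟨D.cp a, bc u a ha, D.cp b, ?_, ?_, ?_, hseq, ?_, ?_, ?_, ?_⟩
      · intro h
        have h1 : ou u = a := congrArg Sigma.fst h
        have h2 : D.IsRetic (D.tail a) := by rw [← h1]; exact houR u
        exact D.tree_ne_retic (by rw [hta]; exact htT) h2
      · intro h
        have h1 : ou u = b := congrArg Sigma.fst h
        have h2 : D.IsRetic (D.tail b) := by rw [← h1]; exact houR u
        exact D.tree_ne_retic (by rw [htb]; exact htT) h2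
      · exact fun h => hab (congrArg Sigma.fst h)
      · show D.head a = D.tail (ou u)
        rw [hua, hou u]
      · show D.tail a = D.tail b
        rw [hta, htb]
      · exact houR u
      · show D.IsTreeNode (D.tail a)
        rw [hta]; exact htT
  have hcover : ∀ e : D.BArc, ¬ D.IsRootArc e.1 → ∃! s, s ∈ P ∧ e ∈ s := by
    intro e hnr
    rcases D.tail_cases hsb e.1 with h | h | h
    · exact absurd h hnr
    · refine ⟨St (D.tail e.1), ⟨(hPmem _).mpr ⟨_, h, rfl⟩, (hStmem _ _).mpr (Or.inl rfl)⟩, ?_⟩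
      rintro s' ⟨hs', hes'⟩
      obtain ⟨t', ht', rfl⟩ := (hPmem s').mp hs'
      rcases (hStmem t' e).mp hes' with h' | ⟨u', a', ha', hta', rfl⟩
      · rw [h']
      · have hx : D.IsRetic (D.tail (bc u' a' ha').1) := houR u'
        exact absurd hx (fun hh => D.tree_ne_retic h hh)
    · have he1 : e.1 = ou ⟨D.tail e.1, h⟩ :=
        D.out_unique (⟨D.tail e.1, h⟩ : {v : V // D.IsRetic v}).2.2 rfl (hou _)
      obtain ⟨a, ha, heqe⟩ := hbc_surj ⟨D.tail e.1, h⟩ e he1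
      have hma : D.MidC f a := ((hMFmem _ _).mp ha).2
      have htaT : D.IsTreeNode (D.tail a) := htree_of_mid a hma
      refine ⟨St (D.tail a), ⟨(hPmem _).mpr ⟨_, htaT, rfl⟩,
        (hStmem _ _).mpr (Or.inr ⟨_, a, ha, rfl, heqe⟩)⟩, ?_⟩
      rintro s' ⟨hs', hes'⟩
      obtain ⟨t', ht', rfl⟩ := (hPmem s').mp hs'
      rcases (hStmem t' _).mp hes' with h' | ⟨u', a', ha', hta', heq⟩
      · have hx : D.IsRetic t' := by rw [← h']; exact h
        exact absurd hx (fun hh => D.tree_ne_retic ht' hh)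
      · have haa : a' = a := (hbc_inj _ a ha u' a' ha' (heqe.symm.trans heq)).symm
        rw [← hta', haa]
  have hPc : D.IsBulgedCherryCover P := ⟨hshapes, hcover, hnoroot⟩
  refine ⟨P, hPc, ?_⟩
  have hStinj : Set.InjOn St (D.tnF : Set V) := by
    intro t ht t' ht' heq
    have htT : D.IsTreeNode t := D.mem_tnF.mp (Finset.mem_coe.mp ht)
    obtain ⟨a, haa⟩ := D.exists_out (v := t) (by have := htT.2; omega)
    have h1 : D.cp a ∈ St t := (hStmem _ _).mpr (Or.inl (by simpa using haa))
    rw [heq] at h1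
    rcases (hStmem _ _).mp h1 with h | ⟨u', a', ha', hta', hbe⟩
    · rw [← haa]
      exact h.symm ▸ rfl
    · have h1 : a = ou u' := congrArg Sigma.fst hbe
      have h2 : D.IsRetic (D.tail a) := by rw [h1]; exact houR u'
      exact absurd h2 (fun hh => D.tree_ne_retic (by rw [haa]; exact htT) hh)
  show P.val.map (fun s => s.image fun e => e.1) = (D.tnF).val.map (D.imgShape f)
  rw [show P.val = (D.tnF).val.map St from Finset.image_val_of_injOn hStinj,
    Multiset.map_map]
  refine Multiset.map_congr rfl ?_
  intro t htv
  have htT : D.IsTreeNode t := D.mem_tnF.mp (Finset.mem_val.mp htv)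
  show (St t).image (fun e : D.BArc => e.1) = D.imgShape f t
  obtain ⟨a, b, hab, hta, htb, ⟨hnm, hseq⟩ | ⟨u, ha, hma, hua, hmb, hseq⟩⟩ := hshape t htT
  · rw [hseq]
    ext c
    simp only [Finset.image_insert, Finset.image_singleton, Finset.mem_insert,
      Finset.mem_singleton, D.mem_imgShape, cp_fst]
    constructor
    · rintro (rfl | rfl)
      · exact Or.inl hta
      · exact Or.inl htb
    · rintro (hc | ⟨a', hta', hma', -⟩)
      · exact D.arcs_two hsb htT hab hta htb c hc
      · exact absurd ⟨a', hta', hma'⟩ hnm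
  · rw [hseq]
    ext c
    simp only [Finset.image_insert, Finset.image_singleton, Finset.mem_insert,
      Finset.mem_singleton, D.mem_imgShape, cp_fst, hbc_fst]
    constructor
    · rintro (rfl | rfl | rfl)
      · exact Or.inr ⟨a, hta, hma, by rw [hou u, hua]⟩
      · exact Or.inl hta
      · exact Or.inl htb
    · rintro (hc | ⟨a', hta', hma', hch⟩)
      · rcases D.arcs_two hsb htT hab hta htb c hc with rfl | rfl
        · exact Or.inr (Or.inl rfl)
        · exact Or.inr (Or.inr rfl)
      · have haa' : a' = a := hf3 a' a (hta'.trans hta.symm) hma' hma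
        subst haa'
        refine Or.inl (D.out_unique u.2.2 ?_ (hou u))
        rw [hch, hua]

theorem classOf_inj (hsb : D.IsSemiBinary) {f f' : {v : V // D.IsRetic v} → A}
    (hf : D.ValidChoice f) (hf' : D.ValidChoice f') (h : D.classOf f = D.classOf f') :
    f = f' := by
  classical
  funext u
  by_contra hne
  set e := f' u with he
  have hhe : D.head e = u.1 := hf'.1 u
  have hre : D.IsRetic (D.head e) := by rw [hhe]; exact u.2
  have hsub : (⟨D.head e, hre⟩ : {v : V // D.IsRetic v}) = u := Subtype.ext hhe
  have hme : D.MidC f e := ⟨hre, fun hEq => hne ((congrArg f hsub).symm.trans hEq.symm)⟩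
  have hte : D.IsTreeNode (D.tail e) := by
    by_contra hnt
    exact hne ((hf.2.1 e hre hnt).trans (congrArg f hsub)).symm
  obtain ⟨w, hw⟩ := D.exists_out (v := u.1) (by rw [u.2.2]; omega)
  have h1 : ∃ m ∈ D.classOf f, e ∈ m ∧ w ∈ m := by
    refine ⟨D.imgShape f (D.tail e), ?_, ?_, ?_⟩
    · exact Multiset.mem_map_of_mem _ (Finset.mem_val.mpr (D.mem_tnF.mpr hte))
    · exact D.mem_imgShape.mpr (Or.inl rfl)
    · exact D.mem_imgShape.mpr (Or.inr ⟨e, rfl, hme, by rw [hw, hhe]⟩)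
  rw [h] at h1
  obtain ⟨m, hm, hem, hwm⟩ := h1
  obtain ⟨t'', ht'', rfl⟩ := Multiset.mem_map.mp hm
  have ht''T : D.IsTreeNode t'' := D.mem_tnF.mp (Finset.mem_val.mp ht'')
  rcases D.mem_imgShape.mp hwm with hw1 | ⟨a2, hta2, hma2, hca2⟩
  · have : D.IsRetic t'' := by rw [← hw1, hw]; exact u.2
    exact D.tree_ne_retic ht''T this
  · have hha2 : D.head a2 = u.1 := by rw [← hca2, hw]
    rcases D.mem_imgShape.mp hem with he1 | ⟨a1, hta1, hma1, hca1⟩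
    · have ha2ne : a2 ≠ e := by
        intro hEq
        obtain ⟨hr2, hne2⟩ := hma2
        have hsub2 : (⟨D.head a2, hr2⟩ : {v : V // D.IsRetic v}) = u := Subtype.ext hha2
        exact hne2 ((hEq.trans he).trans (congrArg f' hsub2).symm)
    
      exact ha2ne (hsb.1.2.1 a2 e (hta2.trans he1.symm) (by rw [hha2, hhe]))
    · have ha12 : a1 = a2 := hf'.2.2 a1 a2 (hta1.trans hta2.symm) hma1 hma2
      have hteu : D.tail e = u.1 := by rw [hca1, ha12, hha2]
      exact D.no_self hsb.1.1 e (by rw [hteu, ← hhe])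

end MGraph


/-- A semi-binary network with reticulations of indegrees
r_1,…,r_k has at most r_1⋯r_k non-isomorphic cherry covers of its bulged version,
with equality iff it is tree-child. -/
theorem stmt19 {V A : Type} [Fintype V] [Fintype A] [DecidableEq V] [DecidableEq A]
    (D : MGraph V A) (hsb : D.IsSemiBinary)
    (k : ℕ) (r : Fin k → ℕ) (bij : Fin k ≃ {v : V // D.IsRetic v})
    (hr : ∀ i, r i = D.indeg ((bij i).1)) :
    {M : Multiset (Finset A) |
        ∃ P : Finset (Finset D.BArc), D.IsBulgedCherryCover P ∧ D.coverClass P = M}.ncard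
      ≤ ∏ i, r i ∧
    (D.IsTreeChild ↔
      {M : Multiset (Finset A) |
          ∃ P : Finset (Finset D.BArc), D.IsBulgedCherryCover P ∧ D.coverClass P = M}.ncard
        = ∏ i, r i) := by
  classical
  set S := {M : Multiset (Finset A) |
      ∃ P : Finset (Finset D.BArc), D.IsBulgedCherryCover P ∧ D.coverClass P = M} with hSdef
  set W := {f : {v : V // D.IsRetic v} → A | D.ValidChoice f} with hWdef
  set All := {f : {v : V // D.IsRetic v} → A | ∀ u, D.head (f u) = u.1} with hAlldef
  have hSW : S = D.classOf '' W := by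
    ext m
    constructor
    · rintro ⟨P, hP, rfl⟩
      obtain ⟨f, hv, hc⟩ := D.exists_choice hsb hP
      exact ⟨f, hv, hc.symm⟩
    · rintro ⟨f, hv, rfl⟩
      obtain ⟨P, hP, hc⟩ := D.exists_cover hsb hv
      exact ⟨P, hP, hc⟩
  have hinj : Set.InjOn D.classOf W := fun f hf f' hf' h => D.classOf_inj hsb hf hf' h
  have hWA : W ⊆ All := fun f hf => hf.1
  have hfinA : All.Finite := Set.toFinite _
  have hcardAll : All.ncard = ∏ i, r i := by
    have h1 : All.ncard = Nat.card All := (Nat.card_coe_set_eq All).symm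
    have e2 : All ≃ ∀ u : {v : V // D.IsRetic v}, {a : A // D.head a = u.1} := by
      rw [hAlldef]
      exact Equiv.subtypePiEquivPi (p := fun (u : {v : V // D.IsRetic v}) (a : A) => D.head a = u.1)
    rw [h1, Nat.card_congr e2, Nat.card_pi]
    have hpc : ∀ u : {v : V // D.IsRetic v}, Nat.card {a : A // D.head a = u.1} = D.indeg u.1 :=
      fun u => Nat.card_eq_fintype_card
    rw [Finset.prod_congr rfl (fun u _ => hpc u)]
    exact (Fintype.prod_equiv bij r (fun u => D.indeg u.1) hr).symm
  have hcardS : S.ncard = W.ncard := by rw [hSW]; exact Set.ncard_image_of_injOn hinj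
  have hbound : W.ncard ≤ All.ncard := Set.ncard_le_ncard hWA hfinA
  refine ⟨by rw [hcardS, ← hcardAll]; exact hbound, ?_, ?_⟩
  · -- tree-child implies equality
    intro hTC
    have hAW : All ⊆ W := by
      intro g hg
      refine ⟨hg, ?_, ?_⟩
      · intro a hra hnt
        exfalso
        rcases D.tail_cases hsb a with h | h | h
        · obtain ⟨e', he', hch⟩ := hTC (D.tail a)
            (fun hl => by have := h.2; have := hl.2; omega)
          have hea : e' = a := D.out_unique h.2 he' rfl
          rw [hea] at hch
          rcases hch with hh | hh
          · exact D.tree_ne_retic hh hra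
          · have := hh.1; have := hra.1; omega
        · exact hnt h
        · obtain ⟨e', he', hch⟩ := hTC (D.tail a)
            (fun hl => by have := h.2; have := hl.2; omega)
          have hea : e' = a := D.out_unique h.2 he' rfl
          rw [hea] at hch
          rcases hch with hh | hh
          · exact D.tree_ne_retic hh hra
          · have := hh.1; have := hra.1; omega
      · intro a b htab hma hmb
        by_contra hab
        rcases D.tail_cases hsb a with h | h | h
        · exact hab (D.out_unique h.2 rfl htab.symm)
        · obtain ⟨e', he', hch⟩ := hTC (D.tail a)
            (fun hl => by have := h.2; have := hl.2; omega)
          rcases D.arcs_two hsb h hab rfl htab.symm e' he' with rfl | rfl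
          · obtain ⟨hr', -⟩ := hma
            rcases hch with hh | hh
            · exact D.tree_ne_retic hh hr'
            · have := hh.1; have := hr'.1; omega
          · obtain ⟨hr', -⟩ := hmb
            rcases hch with hh | hh
            · exact D.tree_ne_retic hh hr'
            · have := hh.1; have := hr'.1; omega
        · exact hab (D.out_unique h.2 rfl htab.symm)
    have hWAll : W = All := Set.Subset.antisymm hWA hAW
    rw [hcardS, hWAll, hcardAll]
  · -- equality implies tree-child
    intro hEq
    by_contra hnTC
    unfold MGraph.IsTreeChild at hnTC
    push_neg at hnTC
    obtain ⟨v, hvl, hvbad⟩ := hnTC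
    have hbase : ∀ u : {v : V // D.IsRetic v}, ∃ a, D.head a = u.1 := fun u =>
      D.exists_in (by have := u.2.1; omega)
    choose base hbasep using hbase
    have hrv : ∀ e', D.tail e' = v → D.IsRetic (D.head e') := by
      intro e' he'
      have hb := hvbad e' he'
      rcases hsb.1.2.2.2 (D.head e') with h | h | h | h
      · exact absurd (D.indeg_pos_of_arc e') (by rw [h.1]; omega)
      · exact absurd (Or.inr h) (by tauto)
      · exact absurd (Or.inl h) (by tauto)
      · exact h
    have hsecond : ∀ (u : {v : V // D.IsRetic v}) (a : A), ∃ b, D.head b = u.1 ∧ b ≠ a := by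
      intro u a
      have h2 : 1 < Fintype.card {x : A // D.head x = u.1} := by
        have h3 : D.indeg u.1 = Fintype.card {x : A // D.head x = u.1} := rfl
        have := u.2.1
        omega
      by_cases hha : D.head a = u.1
      · obtain ⟨b, hb⟩ := Fintype.exists_ne_of_one_lt_card h2 ⟨a, hha⟩
        exact ⟨b.1, b.2, fun h => hb (Subtype.ext h)⟩
      · obtain ⟨⟨b, hb⟩⟩ := Fintype.card_pos_iff.mp (lt_trans zero_lt_one h2)
        exact ⟨b, hb, fun h => hha (h ▸ hb)⟩
    -- find g ∈ All \ W
    have hgex : ∃ g, g ∈ All ∧ g ∉ W := by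
      rcases hsb.1.2.2.2 v with hv | hv | hv | hv
      · -- v is a root
        obtain ⟨e₀, he₀⟩ := D.exists_out (v := v) (by rw [hv.2]; omega)
        have hu0 : D.IsRetic (D.head e₀) := hrv e₀ he₀
        obtain ⟨b0, hb0h, hb0ne⟩ := hsecond ⟨D.head e₀, hu0⟩ e₀
        refine ⟨fun u => if u = ⟨D.head e₀, hu0⟩ then b0 else base u, ?_, ?_⟩
        · intro u
          by_cases hc : u = ⟨D.head e₀, hu0⟩
          · dsimp only; rw [if_pos hc, hc]; exact hb0h
          · dsimp only; rw [if_neg hc]; exact hbasep u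
        · intro hW'
          have hnt : ¬ D.IsTreeNode (D.tail e₀) := by
            rw [he₀]; intro hh; have := hh.1; have := hv.1; omega
          have := hW'.2.1 e₀ hu0 hnt
          dsimp only at this
          rw [if_pos rfl] at this
          exact hb0ne this.symm
      · exact absurd hv hvl
      · -- v is a tree node : two reticulation children
        obtain ⟨a, b, hab, hta, htb, -⟩ := D.two_out hsb hv
        have hra : D.IsRetic (D.head a) := hrv a hta
        have hrb : D.IsRetic (D.head b) := hrv b htb
        have huab : (⟨D.head a, hra⟩ : {v : V // D.IsRetic v}) ≠ ⟨D.head b, hrb⟩ := by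
          intro h
          exact D.heads_ne hsb.1.2.1 hab (hta.trans htb.symm) (congrArg Subtype.val h)
        obtain ⟨a', ha'h, ha'ne⟩ := hsecond ⟨D.head a, hra⟩ a
        obtain ⟨b', hb'h, hb'ne⟩ := hsecond ⟨D.head b, hrb⟩ b
        refine ⟨fun u => if u = ⟨D.head a, hra⟩ then a'
          else if u = ⟨D.head b, hrb⟩ then b' else base u, ?_, ?_⟩
        · intro u
          by_cases hc : u = ⟨D.head a, hra⟩
          · dsimp only; rw [if_pos hc, hc]; exact ha'h
          · dsimp only; rw [if_neg hc]
            by_cases hc' : u = ⟨D.head b, hrb⟩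
            · rw [if_pos hc', hc']; exact hb'h
            · rw [if_neg hc']; exact hbasep u
        · intro hW'
          have hMa2 : D.MidC (fun u => if u = ⟨D.head a, hra⟩ then a'
              else if u = ⟨D.head b, hrb⟩ then b' else base u) a := by
            refine ⟨hra, ?_⟩
            dsimp only
            rw [if_pos rfl]
            exact fun h => ha'ne h.symm
          have hMb2 : D.MidC (fun u => if u = ⟨D.head a, hra⟩ then a'
              else if u = ⟨D.head b, hrb⟩ then b' else base u) b := by
            refine ⟨hrb, ?_⟩
            dsimp only
            rw [if_neg (fun h : (⟨D.head b, hrb⟩ : {v : V // D.IsRetic v}) = ⟨D.head a, hra⟩ =>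
              huab h.symm), if_pos rfl]
            exact fun h => hb'ne h.symm
          exact hab (hW'.2.2 a b (hta.trans htb.symm) hMa2 hMb2)
      · -- v is a reticulation
        obtain ⟨e₀, he₀⟩ := D.exists_out (v := v) (by rw [hv.2]; omega)
        have hu0 : D.IsRetic (D.head e₀) := hrv e₀ he₀
        obtain ⟨b0, hb0h, hb0ne⟩ := hsecond ⟨D.head e₀, hu0⟩ e₀
        refine ⟨fun u => if u = ⟨D.head e₀, hu0⟩ then b0 else base u, ?_, ?_⟩
        · intro u
          by_cases hc : u = ⟨D.head e₀, hu0⟩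
          · dsimp only; rw [if_pos hc, hc]; exact hb0h
          · dsimp only; rw [if_neg hc]; exact hbasep u
        · intro hW'
          have hnt : ¬ D.IsTreeNode (D.tail e₀) := by
            rw [he₀]; intro hh; have := hh.1; have := hv.1; omega
          have := hW'.2.1 e₀ hu0 hnt
          dsimp only at this
          rw [if_pos rfl] at this
          exact hb0ne this.symm
    obtain ⟨g, hgA, hgW⟩ := hgex
    have hss : W ⊂ All := (Set.ssubset_iff_of_subset hWA).mpr ⟨g, hgA, hgW⟩
    have hlt : W.ncard < All.ncard := Set.ncard_lt_ncard hss hfinA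
    rw [hcardS, ← hcardAll] at hEq
    exact (Nat.ne_of_lt hlt) hEq
end
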